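/- arXiv:1212.5797 — 4 statements merged into one kernel-verified Lean document; each statement's English description precedes it below -/
import Mathlib

section
/- Let 0 < β ≤ √(log 2 / 2), let t_N → ∞ and let γ_N → ∞ with γ_N = o(N). Then for every ε > 0, lim_{N→∞} (1/γ_N) * log P( | (e^{(N/2)(log 2 - β^2)}/t_N) * ( log(Z_N/E Z_N) - (Z_N - E Z_N)/(E Z_N) ) | > ε ) = -∞. -/
open MeasureTheory ProbabilityTheory Filter Real Asymptotics
open scoped NNReal ENNReal

set_option maxHeartbeats 2000000



lemma gauss_pdf_shift (c x : ℝ) :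
    Real.exp (c * x) * gaussianPDFReal 0 1 x = Real.exp (c^2/2) * gaussianPDFReal c 1 x := by
  simp only [gaussianPDFReal, NNReal.coe_one, mul_one, sub_zero]
  rw [mul_left_comm, mul_left_comm (Real.exp (c^2/2)), ← Real.exp_add, ← Real.exp_add]
  congr 1
  ring

lemma gauss_smul_key (c x : ℝ) :
    (Real.toNNReal (gaussianPDFReal 0 1 x)) • Real.exp (c * x)
      = Real.exp (c^2/2) * gaussianPDFReal c 1 x := by
  rw [NNReal.smul_def, Real.coe_toNNReal _ (gaussianPDFReal_nonneg 0 1 x), smul_eq_mul,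
    mul_comm, gauss_pdf_shift]

lemma gauss_pdf_eq : gaussianPDF 0 1
    = fun x => ((Real.toNNReal (gaussianPDFReal 0 1 x) : ℝ≥0) : ℝ≥0∞) := by
  funext x; rfl

lemma integrable_exp_gaussianReal (c : ℝ) :
    Integrable (fun x => Real.exp (c * x)) (gaussianReal 0 1) := by
  rw [gaussianReal_of_var_ne_zero 0 one_ne_zero, gauss_pdf_eq,
    integrable_withDensity_iff_integrable_smul ((measurable_gaussianPDFReal 0 1).real_toNNReal)]
  simp only [gauss_smul_key]
  exact (integrable_gaussianPDFReal c 1).const_mul _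

lemma integral_exp_gaussianReal (c : ℝ) :
    ∫ x, Real.exp (c * x) ∂(gaussianReal 0 1) = Real.exp (c^2/2) := by
  rw [gaussianReal_of_var_ne_zero 0 one_ne_zero, gauss_pdf_eq,
    integral_withDensity_eq_integral_smul ((measurable_gaussianPDFReal 0 1).real_toNNReal)]
  simp only [gauss_smul_key]
  rw [integral_const_mul, integral_gaussianPDFReal_eq_one c one_ne_zero, mul_one]



section
variable {Ω : Type*} [MeasureSpace Ω] [IsProbabilityMeasure (ℙ : Measure Ω)]

lemma aemeas_of_law {f : Ω → ℝ} (hf : Measure.map f ℙ = gaussianReal 0 1) :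
    AEMeasurable f ℙ := by
  by_contra h
  rw [Measure.map_of_not_aemeasurable h] at hf
  have h1 : (gaussianReal 0 1) Set.univ = 1 := measure_univ
  rw [← hf] at h1
  simp at h1

lemma exp_integrable_of_law {f : Ω → ℝ} (hf : Measure.map f ℙ = gaussianReal 0 1) (c : ℝ) :
    Integrable (fun ω => Real.exp (c * f ω)) ℙ := by
  have hm := aemeas_of_law hf
  have : Integrable (fun x => Real.exp (c * x)) (Measure.map f ℙ) := by
    rw [hf]; exact integrable_exp_gaussianReal c
  exact (integrable_map_measure this.aestronglyMeasurable hm).mp this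

lemma exp_integral_of_law {f : Ω → ℝ} (hf : Measure.map f ℙ = gaussianReal 0 1) (c : ℝ) :
    ∫ ω, Real.exp (c * f ω) ∂ℙ = Real.exp (c^2/2) := by
  have hm := aemeas_of_law hf
  have hsm : AEStronglyMeasurable (fun x => Real.exp (c * x)) (Measure.map f ℙ) :=
    (Real.continuous_exp.comp (continuous_const.mul continuous_id)).aestronglyMeasurable
  rw [← integral_map hm hsm, hf] at *
  exact integral_exp_gaussianReal c

variable {ι : Type*} [Fintype ι] [DecidableEq ι] {f : ι → Ω → ℝ}

lemma pair_integral (hlaw : ∀ i, Measure.map (f i) ℙ = gaussianReal 0 1)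
    (hind : iIndepFun f ℙ) (c : ℝ) {i j : ι} :
    Integrable (fun ω => Real.exp (c * f i ω) * Real.exp (c * f j ω)) ℙ ∧
    ∫ ω, Real.exp (c * f i ω) * Real.exp (c * f j ω) ∂ℙ
      = if i = j then Real.exp (2 * c^2) else Real.exp (c^2) := by
  rcases eq_or_ne i j with rfl | hij
  · have hfun : (fun ω => Real.exp (c * f i ω) * Real.exp (c * f i ω))
        = fun ω => Real.exp ((2*c) * f i ω) := by
      funext ω; rw [← Real.exp_add]; ring_nf
    rw [hfun, if_pos rfl]
    refine ⟨exp_integrable_of_law (hlaw i) (2*c), ?_⟩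
    rw [exp_integral_of_law (hlaw i) (2*c)]
    congr 1; ring
  · have hIndep : IndepFun (fun ω => Real.exp (c * f i ω)) (fun ω => Real.exp (c * f j ω)) ℙ :=
      (hind.indepFun hij).comp
        (Real.measurable_exp.comp (measurable_const_mul c))
        (Real.measurable_exp.comp (measurable_const_mul c))
    have h1 := exp_integrable_of_law (hlaw i) c
    have h2 := exp_integrable_of_law (hlaw j) c
    refine ⟨hIndep.integrable_mul h1 h2, ?_⟩
    rw [if_neg hij]
    have hmul := hIndep.integral_mul_eq_mul_integral h1.aestronglyMeasurable h2.aestronglyMeasurable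
    rw [show ((fun ω => Real.exp (c * f i ω)) * fun ω => Real.exp (c * f j ω))
        = fun ω => Real.exp (c * f i ω) * Real.exp (c * f j ω) from rfl] at hmul
    rw [hmul, exp_integral_of_law (hlaw i) c, exp_integral_of_law (hlaw j) c, ← Real.exp_add]
    norm_num

lemma sum_exp_moments (hlaw : ∀ i, Measure.map (f i) ℙ = gaussianReal 0 1)
    (hind : iIndepFun f ℙ) (c : ℝ) :
    Integrable (fun ω => ∑ i, Real.exp (c * f i ω)) ℙ ∧
    Integrable (fun ω => (∑ i, Real.exp (c * f i ω))^2) ℙ ∧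
    ∫ ω, (∑ i, Real.exp (c * f i ω)) ∂ℙ = (Fintype.card ι) * Real.exp (c^2/2) ∧
    ∫ ω, (∑ i, Real.exp (c * f i ω))^2 ∂ℙ
      = (Fintype.card ι) * Real.exp (2*c^2)
        + (Fintype.card ι) * ((Fintype.card ι : ℝ) - 1) * Real.exp (c^2) := by
  have hsq : ∀ ω : Ω, (∑ i, Real.exp (c * f i ω))^2
      = ∑ i, ∑ j, Real.exp (c * f i ω) * Real.exp (c * f j ω) := by
    intro ω; rw [sq, Finset.sum_mul_sum]
  have hint1 : Integrable (fun ω => ∑ i, Real.exp (c * f i ω)) ℙ :=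
    integrable_finset_sum _ (fun i _ => exp_integrable_of_law (hlaw i) c)
  have hint2 : Integrable (fun ω => (∑ i, Real.exp (c * f i ω))^2) ℙ := by
    simp only [hsq]
    exact integrable_finset_sum _ (fun i _ =>
      integrable_finset_sum _ (fun j _ => (pair_integral hlaw hind c).1))
  refine ⟨hint1, hint2, ?_, ?_⟩
  · rw [integral_finset_sum _ (fun i _ => exp_integrable_of_law (hlaw i) c)]
    simp only [exp_integral_of_law (hlaw _) c, Finset.sum_const, nsmul_eq_mul,
      Finset.card_univ]
  · simp only [hsq]
    rw [integral_finset_sum _ (fun i _ =>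
      integrable_finset_sum _ (fun j _ => (pair_integral hlaw hind c).1))]
    have hrow : ∀ i : ι, ∫ ω, (∑ j, Real.exp (c * f i ω) * Real.exp (c * f j ω)) ∂ℙ
        = Real.exp (2*c^2) + ((Fintype.card ι : ℝ) - 1) * Real.exp (c^2) := by
      intro i
      rw [integral_finset_sum _ (fun j _ => (pair_integral hlaw hind c).1)]
      rw [Finset.sum_congr rfl (fun j _ => (pair_integral hlaw hind c).2)]
      have step : ∀ j : ι, (if i = j then Real.exp (2*c^2) else Real.exp (c^2))
          = (if i = j then Real.exp (2*c^2) - Real.exp (c^2) else 0) + Real.exp (c^2) := by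
        intro j; by_cases h : i = j <;> simp [h]
      rw [Finset.sum_congr rfl (fun j _ => step j), Finset.sum_add_distrib,
        Finset.sum_ite_eq Finset.univ i, if_pos (Finset.mem_univ i), Finset.sum_const,
        Finset.card_univ, nsmul_eq_mul]
      ring
    rw [Finset.sum_congr rfl (fun i _ => hrow i), Finset.sum_const, Finset.card_univ,
      nsmul_eq_mul]
    ring

end


lemma abs_log_one_add_sub_le {y : ℝ} (h : |y| ≤ 1/2) : |Real.log (1+y) - y| ≤ 2*y^2 := by
  have h1 : |(-y)| < 1 := by rw [abs_neg]; linarith [abs_nonneg y]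
  have h2 := Real.abs_log_sub_add_sum_range_le h1 1
  simp only [Finset.range_one, Finset.sum_singleton, pow_one, Nat.cast_zero, zero_add,
    pow_one, div_one, sub_neg_eq_add, abs_neg] at h2
  have habs : |y|^(1+1) / (1 - |y|) ≤ 2*y^2 := by
    rw [div_le_iff₀ (by linarith [abs_nonneg y] : (0:ℝ) < 1 - |y|)]
    have hy2 : |y|^(1+1) = y^2 := by rw [← sq_abs y]
    rw [hy2]
    nlinarith [sq_nonneg y, abs_nonneg y]
  calc |Real.log (1+y) - y| = |(-y) + Real.log (1 + y)| := by rw [show Real.log (1+y) - y = -y + Real.log (1+y) by ring]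
    _ ≤ |y|^(1+1) / (1 - |y|) := h2
    _ ≤ 2*y^2 := habs


theorem rem_log_linear_exponential_equivalence
    {Ω : Type*} [MeasureSpace Ω] [IsProbabilityMeasure (ℙ : Measure Ω)]
    (β : ℝ) (hβ : 0 < β) (hβ' : β ≤ Real.sqrt (Real.log 2 / 2))
    (t γ : ℕ → ℝ)
    (ht : Tendsto t atTop atTop)
    (hγ : Tendsto γ atTop atTop)
    (hγo : γ =o[atTop] (fun N => (N : ℝ)))
    (X : (N : ℕ) → (Fin N → Bool) → Ω → ℝ)
    (hlaw : ∀ N σ, Measure.map (X N σ) ℙ = gaussianReal 0 1)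
    (hindep : ∀ N, iIndepFun (X N) ℙ)
    (Z : ℕ → Ω → ℝ)
    (hZ : ∀ N ω, Z N ω = ∑ σ : Fin N → Bool, Real.exp (β * Real.sqrt N * X N σ ω))
    (EZ : ℕ → ℝ) (hEZ : ∀ N, EZ N = ∫ ω, Z N ω) :
    ∀ ε > 0,
      Tendsto (fun N =>
          (1 / γ N) *
            Real.log ((ℙ {ω |
                ε < |Real.exp ((N : ℝ) / 2 * (Real.log 2 - β ^ 2)) / t N *
                      (Real.log (Z N ω / EZ N) - (Z N ω - EZ N) / EZ N)|}).toReal))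
        atTop atBot := by
  intro ε hε
  classical
  have hlog2 : 0 < Real.log 2 := Real.log_pos one_lt_two
  have hβ2 : β^2 ≤ Real.log 2 / 2 := by
    have h := Real.sq_sqrt (by positivity : (0:ℝ) ≤ Real.log 2 / 2)
    nlinarith [Real.sqrt_nonneg (Real.log 2 / 2)]
  obtain ⟨c₀, hc₀def⟩ : ∃ c : ℝ, c = (Real.log 2 - β^2)/2 := ⟨_, rfl⟩
  have hc₀ : 0 < c₀ := by rw [hc₀def]; linarith
  -- the key per-N estimate
  have key : ∀ N : ℕ, 1 ≤ N → 1 ≤ t N → ε * Real.exp (-(c₀*N))/2 ≤ 4⁻¹ →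
      0 < (ℙ {ω | ε < |Real.exp ((N : ℝ) / 2 * (Real.log 2 - β ^ 2)) / t N *
            (Real.log (Z N ω / EZ N) - (Z N ω - EZ N) / EZ N)|}).toReal ∧
      (ℙ {ω | ε < |Real.exp ((N : ℝ) / 2 * (Real.log 2 - β ^ 2)) / t N *
            (Real.log (Z N ω / EZ N) - (Z N ω - EZ N) / EZ N)|}).toReal
        ≤ 2/ε * Real.exp (-(c₀*N)) := by
    intro N hN1 htN hr4
    have hNpos : (0:ℝ) < N := by exact_mod_cast hN1
    obtain ⟨hint1, hint2, hI1, hI2⟩ := sum_exp_moments (hlaw N) (hindep N) (β * Real.sqrt N)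
    have hc2 : (β * Real.sqrt N)^2 = β^2 * N := by
      rw [mul_pow, Real.sq_sqrt (Nat.cast_nonneg N)]
    set u : ℝ := Real.exp (β^2 * N / 2) with hudef
    set P : ℝ := 2^N with hPdef
    have hP : (0:ℝ) < P := by positivity
    have hcard : ((Fintype.card (Fin N → Bool)) : ℝ) = P := by
      rw [hPdef]; norm_num [Fintype.card_fun]
    have hEu2 : Real.exp (β^2 * (N:ℝ)) = u^2 := by
      rw [hudef, ← Real.exp_nat_mul]; norm_num; ring_nf
    have hEu4 : Real.exp (2*(β^2 * (N:ℝ))) = u^4 := by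
      rw [hudef, ← Real.exp_nat_mul]; norm_num; ring_nf
    have hP_exp : Real.exp ((N:ℝ) * Real.log 2) = P := by
      rw [Real.exp_nat_mul, Real.exp_log two_pos, hPdef]
    have hu : 0 < u := Real.exp_pos _
    -- value of EZ
    have hEZval : EZ N = P * u := by
      rw [hEZ]
      simp only [hZ]
      rw [hI1, hc2, hcard, hudef]
    have hEZpos : 0 < EZ N := by rw [hEZval]; positivity
    have hEZne : EZ N ≠ 0 := hEZpos.ne'
    -- value of E[Z^2]
    have hZ2val : ∫ ω, (Z N ω)^2 = P * u^4 + P*(P-1)*u^2 := by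
      simp only [hZ]
      rw [hI2, hc2, hcard, hEu4, hEu2]
    have hintZ : Integrable (Z N) ℙ := by
      have : Z N = fun ω => ∑ σ : Fin N → Bool, Real.exp (β * Real.sqrt N * X N σ ω) :=
        funext (hZ N)
      rw [this]; exact hint1
    have hintZ2 : Integrable (fun ω => (Z N ω)^2) ℙ := by simp only [hZ]; exact hint2
    -- the second moment of Y = Z/EZ - 1
    have hdecomp : (fun ω => (Z N ω / EZ N - 1)^2)
        = fun ω => (Z N ω)^2 * ((EZ N)⁻¹)^2 - (2 * (EZ N)⁻¹) * Z N ω + 1 := by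
      funext ω; field_simp; ring
    have hYint : Integrable (fun ω => (Z N ω / EZ N - 1)^2) ℙ := by
      rw [hdecomp]
      exact ((hintZ2.mul_const _).sub (hintZ.const_mul _)).add (integrable_const 1)
    have hYval : ∫ ω, (Z N ω / EZ N - 1)^2 = (u^2 - 1)/P := by
      have hb : Integrable (fun ω => Z N ω^2 * ((EZ N)⁻¹)^2) ℙ := hintZ2.mul_const _
      have hcc : Integrable (fun ω => 2*(EZ N)⁻¹ * Z N ω) ℙ := hintZ.const_mul _
      have ha : Integrable (fun ω => Z N ω^2 * ((EZ N)⁻¹)^2 - 2*(EZ N)⁻¹ * Z N ω) ℙ :=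
        hb.sub hcc
      rw [hdecomp, integral_add ha (integrable_const 1), integral_sub hb hcc,
        integral_mul_const, integral_const_mul, integral_const]
      rw [hZ2val, ← hEZ, hEZval]
      simp only [measure_univ, probReal_univ, ENNReal.toReal_one, smul_eq_mul, one_mul, mul_one]
      field_simp
      ring
    have hY2le : ∫ ω, (Z N ω / EZ N - 1)^2 ≤ Real.exp (-(2*c₀*N)) := by
      rw [hYval]
      have hre : Real.exp (-(2*c₀*(N:ℝ))) = u^2/P := by
        rw [show -(2*c₀*(N:ℝ)) = β^2*N - N * Real.log 2 by rw [hc₀def]; ring,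
          Real.exp_sub, hP_exp, hEu2]
      rw [hre]
      gcongr
      linarith
    -- notation for the event and basic facts
    have hDeq : Real.exp ((N:ℝ)/2 * (Real.log 2 - β^2)) = Real.exp (c₀ * N) := by
      congr 1; rw [hc₀def]; ring
    have hlin : ∀ ω, (Z N ω - EZ N)/EZ N = Z N ω / EZ N - 1 := fun ω => by
      rw [sub_div, div_self hEZne]
    have hZpos : ∀ ω, 0 < Z N ω := fun ω => by
      rw [hZ]
      exact Finset.sum_pos (fun _ _ => Real.exp_pos _) Finset.univ_nonempty
    obtain ⟨r, hrdef⟩ : ∃ r : ℝ, r = ε * Real.exp (-(c₀*N))/2 := ⟨_, rfl⟩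
    have hrpos : 0 < r := by rw [hrdef]; positivity
    have hee : Real.exp (-(c₀*(N:ℝ))) * Real.exp (c₀*N) = 1 := by
      rw [← Real.exp_add]; simp
    constructor
    · -- positivity of the probability
      set D : ℝ := Real.exp (c₀*N)/t N with hDdef
      have htpos : (0:ℝ) < t N := lt_of_lt_of_le one_pos htN
      have hD : 0 < D := by rw [hDdef]; positivity
      set T : ℝ := Real.exp (-1 - ε/D) with hTdef
      have hT : 0 < T := Real.exp_pos _
      have hθ : 0 < EZ N * T / (2*P) := by positivity
      have hβN : 0 < β * Real.sqrt N := mul_pos hβ (Real.sqrt_pos.mpr hNpos)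
      set b : ℝ := Real.log (EZ N * T / (2*P)) / (β * Real.sqrt N) with hbdef
      have hSsub : (⋂ σ : Fin N → Bool, X N σ ⁻¹' (Set.Iio b)) ⊆
          {ω | ε < |Real.exp ((N : ℝ) / 2 * (Real.log 2 - β ^ 2)) / t N *
            (Real.log (Z N ω / EZ N) - (Z N ω - EZ N) / EZ N)|} := by
        intro ω hω
        simp only [Set.mem_iInter, Set.mem_preimage, Set.mem_Iio] at hω
        simp only [Set.mem_setOf_eq]
        have hterm : ∀ σ : Fin N → Bool,
            Real.exp (β * Real.sqrt N * X N σ ω) < EZ N * T / (2*P) := by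
          intro σ
          calc Real.exp (β * Real.sqrt N * X N σ ω)
              < Real.exp (β * Real.sqrt N * b) :=
                Real.exp_lt_exp.mpr ((mul_lt_mul_iff_right₀ hβN).mpr (hω σ))
            _ = EZ N * T / (2*P) := by
                rw [hbdef, mul_div_cancel₀ _ hβN.ne', Real.exp_log hθ]
        have hZlt : Z N ω < EZ N * T / 2 := by
          rw [hZ]
          calc ∑ σ : Fin N → Bool, Real.exp (β * Real.sqrt N * X N σ ω)
              < ∑ _σ : Fin N → Bool, EZ N * T / (2*P) :=
                Finset.sum_lt_sum_of_nonempty Finset.univ_nonempty (fun σ _ => hterm σ)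
            _ = P * (EZ N * T / (2*P)) := by
                rw [Finset.sum_const, Finset.card_univ, nsmul_eq_mul, hcard]
            _ = EZ N * T / 2 := by field_simp
        set v : ℝ := Z N ω / EZ N with hvdef
        have hvpos : 0 < v := div_pos (hZpos ω) hEZpos
        have hvT : v < T := by
          rw [hvdef, div_lt_iff₀ hEZpos]
          calc Z N ω < EZ N * T / 2 := hZlt
            _ ≤ EZ N * T := by linarith [mul_pos hEZpos hT]
            _ = T * EZ N := by ring
        have hlogv : Real.log v + 1 < -(ε/D) := by
          have h1 : Real.log v < Real.log T := Real.log_lt_log hvpos hvT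
          rw [hTdef, Real.log_exp] at h1
          linarith
        have hq : Real.log v - (v - 1) < -(ε/D) := by
          linarith [hvpos.le]
        rw [hDeq, hlin ω, ← hvdef]
        have hqe : ε < D * -(Real.log v - (v-1)) := by
          rw [← div_lt_iff₀' hD]
          linarith
        calc ε < D * -(Real.log v - (v-1)) := hqe
          _ ≤ D * |Real.log v - (v-1)| :=
              mul_le_mul_of_nonneg_left (neg_le_abs _) hD.le
          _ = |D * (Real.log v - (v-1))| := by
              rw [abs_mul, abs_of_pos hD]
          _ = |Real.exp (c₀*N) / t N * (Real.log v - (v-1))| := by rw [hDdef]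
      have hprod := (hindep N).meas_iInter
        (s := fun σ => X N σ ⁻¹' (Set.Iio b))
        (fun σ => ⟨Set.Iio b, measurableSet_Iio, rfl⟩)
      have hfac : ∀ σ : Fin N → Bool, ℙ (X N σ ⁻¹' (Set.Iio b)) ≠ 0 := by
        intro σ
        rw [← Measure.map_apply_of_aemeasurable (aemeas_of_law (hlaw N σ))
          measurableSet_Iio, hlaw N σ]
        intro h0
        have hvol := gaussianReal_absolutelyContinuous' 0 one_ne_zero h0
        rw [Real.volume_Iio] at hvol
        simp at hvol
      have hSpos : ℙ (⋂ σ : Fin N → Bool, X N σ ⁻¹' (Set.Iio b)) ≠ 0 := by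
        rw [hprod]
        exact Finset.prod_ne_zero_iff.mpr (fun σ _ => hfac σ)
      have hEpos : ℙ {ω | ε < |Real.exp ((N : ℝ) / 2 * (Real.log 2 - β ^ 2)) / t N *
            (Real.log (Z N ω / EZ N) - (Z N ω - EZ N) / EZ N)|} ≠ 0 := by
        intro h0
        exact hSpos (le_antisymm (h0 ▸ measure_mono hSsub) zero_le)
      exact ENNReal.toReal_pos hEpos (measure_ne_top _ _)
    · -- upper bound via Chebyshev
      have hsub : {ω | ε < |Real.exp ((N : ℝ) / 2 * (Real.log 2 - β ^ 2)) / t N *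
            (Real.log (Z N ω / EZ N) - (Z N ω - EZ N) / EZ N)|}
          ⊆ {ω | r ≤ (Z N ω / EZ N - 1)^2} := by
        intro ω hω
        simp only [Set.mem_setOf_eq] at hω ⊢
        rw [hDeq, hlin ω] at hω
        obtain ⟨y, hydef⟩ : ∃ y : ℝ, y = Z N ω / EZ N - 1 := ⟨_, rfl⟩
        rw [← hydef]
        rw [← hydef] at hω
        have h1y : Z N ω / EZ N = 1 + y := by rw [hydef]; ring
        rw [h1y] at hω
        by_cases hyc : |y| ≤ 1/2
        · have hlog := abs_log_one_add_sub_le hyc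
          have hD0 : 0 < Real.exp (c₀*(N:ℝ))/t N := by positivity
          have hstep : ε < Real.exp (c₀*(N:ℝ)) * (2*y^2) := by
            calc ε < |Real.exp (c₀*(N:ℝ)) / t N * (Real.log (1+y) - y)| := hω
              _ = Real.exp (c₀*(N:ℝ)) / t N * |Real.log (1+y) - y| := by
                  rw [abs_mul, abs_of_pos hD0]
              _ ≤ Real.exp (c₀*(N:ℝ)) * (2*y^2) := by
                  have h1 : Real.exp (c₀*(N:ℝ)) / t N ≤ Real.exp (c₀*(N:ℝ)) :=
                    div_le_self (Real.exp_pos _).le htN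
                  exact mul_le_mul h1 hlog (abs_nonneg _) (Real.exp_pos _).le
          have h5 : ε * Real.exp (-(c₀*(N:ℝ))) < 2*y^2 := by
            have h6 := mul_lt_mul_of_pos_left hstep (Real.exp_pos (-(c₀*(N:ℝ))))
            rw [show Real.exp (-(c₀*(N:ℝ))) * (Real.exp (c₀*(N:ℝ)) * (2*y^2))
                = (Real.exp (-(c₀*(N:ℝ))) * Real.exp (c₀*(N:ℝ))) * (2*y^2) by ring,
              hee, one_mul] at h6
            linarith [h6]
          rw [hrdef]
          linarith
        · push_neg at hyc
          have : (1/2:ℝ)^2 ≤ y^2 := by nlinarith [sq_abs y, abs_nonneg y]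
          rw [hrdef]
          calc ε * Real.exp (-(c₀*(N:ℝ)))/2 ≤ 4⁻¹ := hr4
            _ = (1/2:ℝ)^2 := by norm_num
            _ ≤ y^2 := this
      have hcheb := mul_meas_ge_le_integral_of_nonneg
        (ae_of_all _ (fun ω => sq_nonneg (Z N ω / EZ N - 1))) hYint r
      have hmono : (ℙ {ω | ε < |Real.exp ((N : ℝ) / 2 * (Real.log 2 - β ^ 2)) / t N *
            (Real.log (Z N ω / EZ N) - (Z N ω - EZ N) / EZ N)|}).toReal
          ≤ (ℙ {ω | r ≤ (Z N ω / EZ N - 1)^2}).toReal :=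
        ENNReal.toReal_mono (measure_ne_top _ _) (measure_mono hsub)
      have htr : 0 ≤ (ℙ {ω | r ≤ (Z N ω / EZ N - 1)^2}).toReal := ENNReal.toReal_nonneg
      have hfinal : r * (ℙ {ω | ε < |Real.exp ((N : ℝ) / 2 * (Real.log 2 - β ^ 2)) / t N *
            (Real.log (Z N ω / EZ N) - (Z N ω - EZ N) / EZ N)|}).toReal
          ≤ Real.exp (-(2*c₀*N)) := by
        calc r * _ ≤ r * (ℙ {ω | r ≤ (Z N ω / EZ N - 1)^2}).toReal :=
              mul_le_mul_of_nonneg_left hmono hrpos.le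
          _ ≤ ∫ ω, (Z N ω / EZ N - 1)^2 := hcheb
          _ ≤ Real.exp (-(2*c₀*N)) := hY2le
      have hsq2 : Real.exp (-(2*c₀*(N:ℝ))) = Real.exp (-(c₀*N)) * Real.exp (-(c₀*N)) := by
        rw [← Real.exp_add]; ring_nf
      rw [hrdef] at hfinal
      rw [show (2:ℝ)/ε * Real.exp (-(c₀*N)) = (Real.exp (-(c₀*N)) * Real.exp (-(c₀*N))) / (ε * Real.exp (-(c₀*N))/2) by
        field_simp]
      rw [← hsq2]
      rw [le_div_iff₀ (by positivity)]
      linarith [hfinal]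
  -- conclude from the per-N bound
  have hev1 : ∀ᶠ N : ℕ in atTop, 1 ≤ t N := ht.eventually_ge_atTop 1
  have hev2 : ∀ᶠ N : ℕ in atTop, 1 ≤ γ N := hγ.eventually_ge_atTop 1
  have hev3 : ∀ᶠ N : ℕ in atTop, 1 ≤ N := eventually_ge_atTop 1
  have hcN : Tendsto (fun N : ℕ => c₀ * N) atTop atTop :=
    (tendsto_natCast_atTop_atTop (R := ℝ)).const_mul_atTop hc₀
  have hexp0 : Tendsto (fun N : ℕ => Real.exp (-(c₀*N))) atTop (nhds 0) :=
    Real.tendsto_exp_atBot.comp (tendsto_neg_atTop_atBot.comp hcN)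
  have hev4 : ∀ᶠ N : ℕ in atTop, ε * Real.exp (-(c₀*N))/2 ≤ 4⁻¹ := by
    have : Tendsto (fun N : ℕ => ε * Real.exp (-(c₀*N))/2) atTop (nhds 0) := by
      simpa using (hexp0.const_mul ε).div_const 2
    exact this.eventually_le_const (by norm_num)
  -- the comparison sequence tends to -∞
  have hg : Tendsto (fun N : ℕ => (1/γ N) * (Real.log (2/ε) - c₀*N)) atTop atBot := by
    have h1 : Tendsto (fun N : ℕ => (γ N)⁻¹) atTop (nhds 0) := hγ.inv_tendsto_atTop
    have hq0 : Tendsto (fun N : ℕ => γ N / (N:ℝ)) atTop (nhds 0) :=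
      hγo.tendsto_div_nhds_zero
    have hqpos : ∀ᶠ N : ℕ in atTop, γ N / (N:ℝ) ∈ Set.Ioi (0:ℝ) := by
      filter_upwards [hev2, hev3] with N h2 h3
      have : (0:ℝ) < N := by exact_mod_cast h3
      exact div_pos (lt_of_lt_of_le one_pos h2) this
    have h2 : Tendsto (fun N : ℕ => (N:ℝ) / γ N) atTop atTop := by
      have := tendsto_inv_nhdsGT_zero.comp
        (tendsto_nhdsWithin_iff.mpr ⟨hq0, hqpos⟩)
      refine this.congr (fun N => ?_)
      simp [Function.comp, inv_div]
    have h3 : Tendsto (fun N : ℕ => -(c₀ * ((N:ℝ) / γ N))) atTop atBot :=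
      tendsto_neg_atTop_atBot.comp (h2.const_mul_atTop hc₀)
    have h4 : Tendsto (fun N : ℕ => Real.log (2/ε) * (γ N)⁻¹ + -(c₀ * ((N:ℝ)/γ N)))
        atTop atBot := by
      exact Tendsto.add_atBot (by simpa using (h1.const_mul (Real.log (2/ε)))) h3
    refine h4.congr (fun N => ?_) |>.mono_right le_rfl
    ring
  refine tendsto_atBot_mono' atTop ?_ hg
  filter_upwards [hev1, hev2, hev3, hev4] with N h1 h2 h3 h4
  obtain ⟨hpos, hle⟩ := key N h3 h1 h4
  have hγpos : (0:ℝ) < γ N := lt_of_lt_of_le one_pos h2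
  have hlogle : Real.log ((ℙ {ω | ε < |Real.exp ((N : ℝ) / 2 * (Real.log 2 - β ^ 2)) / t N *
        (Real.log (Z N ω / EZ N) - (Z N ω - EZ N) / EZ N)|}).toReal)
      ≤ Real.log (2/ε) - c₀*N := by
    have := Real.log_le_log hpos hle
    rwa [Real.log_mul (by positivity) (Real.exp_ne_zero _), Real.log_exp] at this
  have h1γ : (0:ℝ) ≤ 1/γ N := by positivity
  exact mul_le_mul_of_nonneg_left hlogle h1γ
end

section
/- Let β = √(log 2 / 2) and let t_N → ∞ with t_N = o(√(log N)). Then lim_{N→∞} (1/t_N^2) * log( 2^N * P( X > c_N(β) ) ) = -∞, where X is standard Gaussian and c_N(β) = (1/(β√N)) log( exp(Nβ^2) 2^{N/2} t_N^{-1} + exp(Nβ^2/2) ). -/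
open MeasureTheory ProbabilityTheory Filter Real Set Topology Asymptotics

lemma aux_hasDeriv (x : ℝ) : HasDerivAt (fun y : ℝ => -Real.exp (-y^2/2)) (x * Real.exp (-x^2/2)) x := by
  have h1 : HasDerivAt (fun y : ℝ => -y^2/2) (-x) x := by
    have := (hasDerivAt_pow 2 x).neg.div_const 2
    exact this.congr_deriv (by ring)
  have h2 := (h1.exp).neg
  exact h2.congr_deriv (by ring)

lemma aux_tendsto : Tendsto (fun y : ℝ => -Real.exp (-y^2/2)) atTop (𝓝 0) := by
  have h : Tendsto (fun y : ℝ => y^2/2) atTop atTop :=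
    (tendsto_pow_atTop two_ne_zero).atTop_div_const (by norm_num)
  have := Real.tendsto_exp_atBot.comp (tendsto_neg_atTop_atBot.comp h)
  convert this.neg using 2 with y
  · simp [Function.comp]; ring_nf
  · simp

lemma aux_integrableOn (a : ℝ) (ha : 0 < a) :
    IntegrableOn (fun x => x * Real.exp (-x^2/2)) (Ioi a) := by
  refine integrableOn_Ioi_deriv_of_nonneg' (g := fun y => -Real.exp (-y^2/2))
    (fun x _ => aux_hasDeriv x) (fun x hx => ?_) (l := 0) aux_tendsto
  have : (0:ℝ) < x := ha.trans hx
  positivity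

lemma aux_integral (a : ℝ) (ha : 0 < a) :
    ∫ x in Ioi a, x * Real.exp (-x^2/2) = Real.exp (-a^2/2) := by
  have h := integral_Ioi_of_hasDerivAt_of_nonneg' (g := fun y => -Real.exp (-y^2/2))
    (g' := fun x => x * Real.exp (-x^2/2)) (fun x _ => aux_hasDeriv x)
    (fun x hx => by have : (0:ℝ) < x := ha.trans hx; positivity) (l := 0) aux_tendsto
  simpa using h

lemma gauss_tail (a : ℝ) (ha : 0 < a) :
    (gaussianReal 0 1 (Ioi a)).toReal ≤ Real.exp (-a^2/2) / (a * Real.sqrt (2*π)) := by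
  rw [gaussianReal_apply_eq_integral 0 one_ne_zero,
    ENNReal.toReal_ofReal (setIntegral_nonneg measurableSet_Ioi
      (fun x _ => gaussianPDFReal_nonneg 0 1 x))]
  have hpdf : ∀ x : ℝ, gaussianPDFReal 0 1 x = (Real.sqrt (2*π))⁻¹ * Real.exp (-x^2/2) := by
    intro x; simp [gaussianPDFReal]
  have h1 : ∫ x in Ioi a, gaussianPDFReal 0 1 x
      ≤ ∫ x in Ioi a, (Real.sqrt (2*π))⁻¹ * a⁻¹ * (x * Real.exp (-x^2/2)) := by
    refine setIntegral_mono_on ((integrable_gaussianPDFReal 0 1).restrict)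
      ((aux_integrableOn a ha).const_mul _) measurableSet_Ioi (fun x hx => ?_)
    rw [hpdf]
    have hxa : (0:ℝ) < x := ha.trans hx
    have h1a : 1 ≤ a⁻¹ * x := by
      rw [inv_mul_eq_div, le_div_iff₀ ha]
      simpa using (le_of_lt hx.out)
    calc (Real.sqrt (2*π))⁻¹ * Real.exp (-x^2/2)
        ≤ (Real.sqrt (2*π))⁻¹ * ((a⁻¹ * x) * Real.exp (-x^2/2)) := by
          apply mul_le_mul_of_nonneg_left _ (by positivity)
          nlinarith [Real.exp_pos (-x^2/2)]
      _ = (Real.sqrt (2*π))⁻¹ * a⁻¹ * (x * Real.exp (-x^2/2)) := by ring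
  rw [integral_const_mul, aux_integral a ha] at h1
  calc ∫ x in Ioi a, gaussianPDFReal 0 1 x ≤ _ := h1
    _ = Real.exp (-a^2/2) / (a * Real.sqrt (2*π)) := by
        field_simp

lemma gauss_pos (a : ℝ) : 0 < (gaussianReal 0 1 (Ioi a)).toReal := by
  rw [gaussianReal_apply_eq_integral 0 one_ne_zero]
  rw [ENNReal.toReal_ofReal (setIntegral_nonneg measurableSet_Ioi
      (fun x _ => gaussianPDFReal_nonneg 0 1 x))]
  refine (setIntegral_pos_iff_support_of_nonneg_ae ?_ ?_).mpr ?_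
  · exact ae_of_all _ (fun x => gaussianPDFReal_nonneg 0 1 x)
  · exact (integrable_gaussianPDFReal 0 1).restrict
  · have hs : Function.support (gaussianPDFReal 0 1) = Set.univ := by
      ext x; simp [Function.mem_support, (gaussianPDFReal_pos 0 1 x one_ne_zero).ne']
    rw [hs, Set.univ_inter]
    simp [Real.volume_Ioi]

theorem truncation_union_bound_critical
    {Ω : Type*} [MeasureSpace Ω] [IsProbabilityMeasure (ℙ : Measure Ω)]
    (β : ℝ) (hβ : 0 < β) (hβ' : β = Real.sqrt (Real.log 2 / 2))
    (t : ℕ → ℝ) (htpos : ∀ N, 0 < t N) (ht : Tendsto t atTop atTop)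
    (hbound : t =o[atTop] (fun N => Real.sqrt (Real.log N)))
    (X : Ω → ℝ) (hlaw : Measure.map X ℙ = gaussianReal 0 1)
    (c : ℕ → ℝ)
    (hc : ∀ N, c N = (1 / (β * Real.sqrt N)) *
        Real.log (Real.exp (N * β ^ 2) * (2 : ℝ) ^ ((N : ℝ) / 2) * (t N)⁻¹ +
          Real.exp (N * β ^ 2 / 2))) :
    Tendsto (fun N =>
        (1 / (t N) ^ 2) * Real.log (2 ^ N * (ℙ {ω | c N < X ω}).toReal))
      atTop atBot := by
  have hlog2 : (0:ℝ) < Real.log 2 := Real.log_pos one_lt_two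
  have hβ2 : β ^ 2 = Real.log 2 / 2 := by
    rw [hβ', sq_sqrt (by positivity)]
  have hXm : AEMeasurable X ℙ := by
    by_contra h
    rw [Measure.map_of_not_aemeasurable h] at hlaw
    have := measure_univ (μ := gaussianReal 0 1)
    rw [← hlaw] at this
    simp at this
  have hmap : ∀ a : ℝ, ℙ {ω | a < X ω} = gaussianReal 0 1 (Ioi a) := by
    intro a
    rw [← hlaw, Measure.map_apply_of_aemeasurable hXm measurableSet_Ioi]
    rfl
  set K : ℝ := Real.log ((β/2) * Real.sqrt (2*π)) with hK
  set g : ℕ → ℝ := fun N => 2 * (Real.log (t N) / (t N)^2) - K / (t N)^2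
      - (1/2) * (Real.log N / (t N)^2) with hg
  have hsqrt2pi : 0 < Real.sqrt (2*π) := Real.sqrt_pos.mpr (by positivity)
  -- the eventual bound
  have hev : ∀ᶠ N in atTop, (1 / (t N) ^ 2) *
      Real.log (2 ^ N * (ℙ {ω | c N < X ω}).toReal) ≤ g N := by
    have ev2 : ∀ᶠ N : ℕ in atTop, t N ≤ Real.sqrt (Real.log N) := by
      filter_upwards [hbound.bound one_pos] with N hN
      rw [Real.norm_eq_abs, Real.norm_eq_abs, one_mul] at hN
      calc t N ≤ |t N| := le_abs_self _
        _ ≤ |Real.sqrt (Real.log N)| := hN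
        _ = Real.sqrt (Real.log N) := abs_of_nonneg (Real.sqrt_nonneg _)
    filter_upwards [ht.eventually_ge_atTop 1, ev2, eventually_ge_atTop 2] with N hT hTle hN2
    have hNpos : (0:ℝ) < N := by
      have : (2:ℝ) ≤ N := by exact_mod_cast hN2
      linarith
    set s : ℝ := Real.sqrt N with hs
    have hspos : 0 < s := Real.sqrt_pos.mpr hNpos
    have hNs : (N:ℝ) = s^2 := (Real.sq_sqrt hNpos.le).symm
    set L : ℝ := Real.log (t N) with hLdef
    have hL0 : 0 ≤ L := Real.log_nonneg hT
    have hLle : L ≤ N * Real.log 2 := by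
      have h1 : t N ≤ s := by
        refine hTle.trans (Real.sqrt_le_sqrt ?_)
        linarith [Real.log_le_sub_one_of_pos hNpos]
      have h2 : L ≤ Real.log s := Real.log_le_log (by linarith) h1
      rw [hs, Real.log_sqrt hNpos.le] at h2
      have h3 : Real.log N ≤ (N:ℝ) - 1 := Real.log_le_sub_one_of_pos hNpos
      nlinarith [Real.log_two_gt_d9]
    set A : ℝ := Real.exp (N * β ^ 2) * (2 : ℝ) ^ ((N : ℝ) / 2) * (t N)⁻¹ +
          Real.exp (N * β ^ 2 / 2) with hA
    have htN := htpos N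
    have hfirstpos : 0 < Real.exp (N * β ^ 2) * (2 : ℝ) ^ ((N : ℝ) / 2) * (t N)⁻¹ := by
      positivity
    have hApos : 0 < A := by positivity
    have hcN : c N = (1 / (β * s)) * Real.log A := hc N
    have hlogA1 : (N:ℝ) * β ^ 2 / 2 ≤ Real.log A := by
      rw [← Real.log_exp ((N:ℝ) * β ^ 2 / 2)]
      exact Real.log_le_log (Real.exp_pos _) (le_add_of_nonneg_left hfirstpos.le)
    have hlogA2 : (N:ℝ) * Real.log 2 - L ≤ Real.log A := by
      have hle : Real.exp (N * β ^ 2) * (2 : ℝ) ^ ((N : ℝ) / 2) * (t N)⁻¹ ≤ A :=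
        le_add_of_nonneg_right (Real.exp_pos _).le
      have heq : Real.log (Real.exp (N * β ^ 2) * (2 : ℝ) ^ ((N : ℝ) / 2) * (t N)⁻¹)
          = (N:ℝ) * Real.log 2 - L := by
        rw [Real.log_mul (by positivity) (by simpa using htN.ne'),
          Real.log_mul (Real.exp_ne_zero _) (by positivity),
          Real.log_exp, Real.log_rpow two_pos, Real.log_inv, hβ2]
        ring
      calc (N:ℝ) * Real.log 2 - L = _ := heq.symm
        _ ≤ Real.log A := Real.log_le_log hfirstpos hle
    have hβspos : 0 < β * s := by positivity
    have hclow : β * s / 2 ≤ c N := by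
      have h1 : (1/(β*s)) * ((N:ℝ) * β ^ 2 / 2) ≤ (1/(β*s)) * Real.log A :=
        mul_le_mul_of_nonneg_left hlogA1 (by positivity)
      have h2 : (1/(β*s)) * ((N:ℝ) * β ^ 2 / 2) = β * s / 2 := by
        rw [hNs]; field_simp
      rw [hcN]; linarith
    have hcpos : 0 < c N := lt_of_lt_of_le (by positivity) hclow
    set D : ℝ := ((N:ℝ) * Real.log 2 - L) / (β * s) with hD
    have hD0 : 0 ≤ D := div_nonneg (by linarith) hβspos.le
    have hDle : D ≤ c N := by
      have h1 : (1/(β*s)) * ((N:ℝ)*Real.log 2 - L) ≤ (1/(β*s)) * Real.log A :=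
        mul_le_mul_of_nonneg_left hlogA2 (by positivity)
      have h2 : (1/(β*s)) * ((N:ℝ)*Real.log 2 - L) = D := by rw [hD]; ring
      rw [hcN]; linarith
    have hβs2 : (β*s)^2 = (N:ℝ) * Real.log 2 / 2 := by
      rw [mul_pow, hβ2, hNs]; ring
    have hM : 0 < (N:ℝ) * Real.log 2 := by positivity
    have hDsq : (N:ℝ) * Real.log 2 - D^2/2 ≤ 2*L := by
      have h1 : D^2 = ((N:ℝ)*Real.log 2 - L)^2 / ((N:ℝ)*Real.log 2/2) := by
        rw [hD, div_pow, hβs2]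
      have h2 : (N:ℝ)*Real.log 2 - D^2/2 = 2*L - L^2/((N:ℝ)*Real.log 2) := by
        rw [h1]; field_simp; ring
      have h3 : 0 ≤ L^2/((N:ℝ)*Real.log 2) := by positivity
      linarith
    set P := (ℙ {ω | c N < X ω}).toReal with hPd
    have hPpos : 0 < P := by rw [hPd, hmap]; exact gauss_pos _
    have hPle : P ≤ Real.exp (-(c N)^2/2) / ((c N) * Real.sqrt (2*π)) := by
      rw [hPd, hmap]; exact gauss_tail _ hcpos
    have hP2 : P ≤ Real.exp (-D^2/2) / ((β*s/2) * Real.sqrt (2*π)) := by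
      refine hPle.trans ?_
      have hsq : D^2 ≤ (c N)^2 := pow_le_pow_left₀ hD0 hDle 2
      exact div_le_div₀ (Real.exp_pos _).le (Real.exp_le_exp.mpr (by linarith))
        (by positivity) (mul_le_mul_of_nonneg_right hclow hsqrt2pi.le)
    have key : (2:ℝ)^N * P ≤ Real.exp (2*L - (1/2)*Real.log N - K) := by
      have h2N : (2:ℝ)^N = Real.exp ((N:ℝ)*Real.log 2) := by
        rw [Real.exp_nat_mul, Real.exp_log two_pos]
      have hden : (β*s/2) * Real.sqrt (2*π) = Real.exp (K + Real.log N/2) := by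
        rw [Real.exp_add, hK, Real.exp_log (by positivity), ← Real.log_sqrt hNpos.le,
          Real.exp_log hspos]
        ring
      calc (2:ℝ)^N * P ≤ (2:ℝ)^N * (Real.exp (-D^2/2) / ((β*s/2)*Real.sqrt (2*π))) :=
            mul_le_mul_of_nonneg_left hP2 (by positivity)
        _ = Real.exp ((N:ℝ)*Real.log 2 - D^2/2 - (K + Real.log N/2)) := by
            rw [h2N, hden, div_eq_mul_inv, ← Real.exp_neg, ← mul_assoc, ← Real.exp_add,
              ← Real.exp_add]
            congr 1
            ring
        _ ≤ Real.exp (2*L - (1/2)*Real.log N - K) := by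
            apply Real.exp_le_exp.mpr; linarith
    have hflog : Real.log ((2:ℝ)^N * P) ≤ 2*L - (1/2)*Real.log N - K := by
      have h := Real.log_le_log (by positivity) key
      rwa [Real.log_exp] at h
    calc (1/(t N)^2) * Real.log ((2:ℝ)^N * P)
        ≤ (1/(t N)^2) * (2*L - (1/2)*Real.log N - K) :=
          mul_le_mul_of_nonneg_left hflog (by positivity)
      _ = g N := by simp only [hg]; ring
  -- the limit
  have ht2 : Tendsto (fun N => (t N)^2) atTop atTop := (tendsto_pow_atTop two_ne_zero).comp ht
  have hlogt : Tendsto (fun N => Real.log (t N)/(t N)^2) atTop (𝓝 0) := by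
    apply squeeze_zero' (g := fun N => (t N)⁻¹)
    · filter_upwards [ht.eventually_ge_atTop 1] with N hN
      have := htpos N
      exact div_nonneg (Real.log_nonneg hN) (by positivity)
    · filter_upwards [ht.eventually_ge_atTop 1] with N hN
      have htN := htpos N
      rw [div_le_iff₀ (by positivity)]
      have h2 : (t N)⁻¹ * (t N)^2 = t N := by field_simp [pow_two]
      rw [h2]
      linarith [Real.log_le_sub_one_of_pos htN]
    · exact ht.inv_tendsto_atTop
  have hKt : Tendsto (fun N => K/(t N)^2) atTop (𝓝 0) := ht2.const_div_atTop K
  have hlogN : Tendsto (fun N : ℕ => Real.log N/(t N)^2) atTop atTop := by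
    have h2 : (fun N : ℕ => (t N)^2) =o[atTop] (fun N : ℕ => Real.log N) := by
      refine (hbound.mul hbound).congr' ?_ ?_
      · filter_upwards with N
        rw [pow_two]
      · filter_upwards [eventually_ge_atTop 1] with N hN
        exact Real.mul_self_sqrt (Real.log_nonneg (by exact_mod_cast hN))
    have hdiv := h2.tendsto_div_nhds_zero
    have hevpos : ∀ᶠ N : ℕ in atTop, (t N)^2 / Real.log N ∈ Ioi (0:ℝ) := by
      filter_upwards [eventually_ge_atTop 2] with N hN
      have h1 : (1:ℝ) < N := by
        have : (2:ℝ) ≤ N := by exact_mod_cast hN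
        linarith
      have := htpos N
      exact div_pos (by positivity) (Real.log_pos h1)
    have h3 := Filter.Tendsto.inv_tendsto_nhdsGT_zero
      (tendsto_nhdsWithin_of_tendsto_nhds_of_eventually_within _ hdiv hevpos)
    refine h3.congr (fun N => ?_)
    simp only [Pi.inv_apply]
    rw [inv_div]
  have hgBot : Tendsto g atTop atBot := by
    have h1 : Tendsto (fun N => 2*(Real.log (t N)/(t N)^2) - K/(t N)^2) atTop (𝓝 (2*0-0)) :=
      (hlogt.const_mul 2).sub hKt
    have h2 : Tendsto (fun N : ℕ => (-(1/2) : ℝ) * (Real.log N/(t N)^2)) atTop atBot :=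
      hlogN.const_mul_atTop_of_neg (by norm_num)
    have h3 := h1.add_atBot h2
    refine h3.congr (fun N => ?_)
    simp only [hg]; ring
  exact tendsto_atBot_mono' atTop hev hgBot
end

section
/- Let 0 < β ≤ √(log 2 / 2) and let t_N → ∞ with t_N = o(√N) if β < √(log2/2) and t_N = o(√(log N)) if β = √(log2/2). For X standard Gaussian set Y_N = (exp(β√N X) - exp(Nβ^2/2))/exp(Nβ^2) and Y_N^t = Y_N · 1{Y_N ≤ 2^{N/2}/t_N}. Then 2^{N/2} t_N^{-1} E[Y_N^t] → 0 as N → ∞. -/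
open MeasureTheory ProbabilityTheory Filter Real Asymptotics Set Topology NNReal ENNReal

namespace TFMV

lemma pdf1_eq (x : ℝ) :
    gaussianPDFReal 0 1 x = (Real.sqrt (2*π))⁻¹ * Real.exp (-x^2/2) := by
  simp [gaussianPDFReal]

lemma exp_mul_pdf1 (θ : ℝ) :
    (fun x => Real.exp (θ*x) * gaussianPDFReal 0 1 x)
      = (fun x => Real.exp (θ^2/2) * gaussianPDFReal θ 1 x) := by
  funext x
  simp only [gaussianPDFReal, NNReal.coe_one, mul_one, sub_zero]
  rw [mul_left_comm, mul_left_comm (Real.exp (θ^2/2)), ← Real.exp_add, ← Real.exp_add]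
  congr 2
  ring

lemma integrable_exp_pdf1 (θ : ℝ) :
    Integrable (fun x => Real.exp (θ*x) * gaussianPDFReal 0 1 x) := by
  rw [exp_mul_pdf1]
  exact (integrable_gaussianPDFReal θ 1).const_mul _

lemma integral_exp_pdf1 (θ : ℝ) :
    ∫ x, Real.exp (θ*x) * gaussianPDFReal 0 1 x = Real.exp (θ^2/2) := by
  rw [exp_mul_pdf1, integral_const_mul, integral_gaussianPDFReal_eq_one θ one_ne_zero, mul_one]

noncomputable def dnn : ℝ → ℝ≥0 := fun x => (gaussianPDFReal 0 1 x).toNNReal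

lemma meas_dnn : Measurable dnn := (measurable_gaussianPDFReal 0 1).real_toNNReal

lemma gauss_eq : gaussianReal 0 1 = volume.withDensity (fun x => (dnn x : ℝ≥0∞)) := by
  rw [gaussianReal_of_var_ne_zero _ one_ne_zero]
  rfl

lemma smul_eq (g : ℝ → ℝ) (x : ℝ) : dnn x • g x = g x * gaussianPDFReal 0 1 x := by
  simp [dnn, NNReal.smul_def, Real.coe_toNNReal _ (gaussianPDFReal_nonneg 0 1 x), mul_comm]

lemma integral_gauss (g : ℝ → ℝ) :
    ∫ x, g x ∂(gaussianReal 0 1) = ∫ x, g x * gaussianPDFReal 0 1 x := by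
  rw [gauss_eq, integral_withDensity_eq_integral_smul meas_dnn]
  exact integral_congr_ae (Filter.Eventually.of_forall fun x => smul_eq g x)

lemma setIntegral_gauss (g : ℝ → ℝ) {s : Set ℝ} (hs : MeasurableSet s) :
    ∫ x in s, g x ∂(gaussianReal 0 1) = ∫ x in s, g x * gaussianPDFReal 0 1 x := by
  rw [gauss_eq, setIntegral_withDensity_eq_setIntegral_smul meas_dnn _ hs]
  exact integral_congr_ae (Filter.Eventually.of_forall fun x => smul_eq g x)

lemma integrable_gauss {g : ℝ → ℝ}
    (h : Integrable (fun x => g x * gaussianPDFReal 0 1 x)) :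
    Integrable g (gaussianReal 0 1) := by
  rw [gauss_eq, integrable_withDensity_iff_integrable_coe_smul meas_dnn]
  refine h.congr (Filter.Eventually.of_forall fun x => ?_)
  exact (smul_eq g x).symm

lemma int_g1 : Integrable (fun x : ℝ => Real.exp (-x^2/2)) := by
  have h := integrable_exp_neg_mul_sq (by norm_num : (0:ℝ) < 1/2)
  refine h.congr (Filter.Eventually.of_forall fun x => ?_)
  ring_nf

lemma int_g2 : Integrable (fun x : ℝ => x * Real.exp (-x^2/2)) := by
  have h := integrable_mul_exp_neg_mul_sq (by norm_num : (0:ℝ) < 1/2)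
  refine h.congr (Filter.Eventually.of_forall fun x => ?_)
  ring_nf

lemma integral_tail_id (b θ : ℝ) :
    ∫ x in Ioi b, (x - θ) * Real.exp (-(x-θ)^2/2) = Real.exp (-(b-θ)^2/2) := by
  have hderiv : ∀ x ∈ Ici b,
      HasDerivAt (fun y => -Real.exp (-(y-θ)^2/2)) ((x - θ) * Real.exp (-(x-θ)^2/2)) x := by
    intro x _
    have h1 : HasDerivAt (fun y : ℝ => -(y-θ)^2/2) (-(x-θ)) x := by
      have h0 : HasDerivAt (fun y : ℝ => y - θ) 1 x := (hasDerivAt_id x).sub_const θ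
      have h2 : HasDerivAt (fun y : ℝ => -(y-θ)^2/2) (-(((2:ℕ):ℝ) * (x-θ)^(2-1) * 1)/2) x :=
        (h0.pow 2).neg.div_const 2
      convert h2 using 1
      ring
    have : HasDerivAt (fun y => -Real.exp (-(y-θ)^2/2)) (-(Real.exp (-(x-θ)^2/2) * -(x-θ))) x :=
      (h1.exp).neg
    convert this using 1
    ring
  have hint : IntegrableOn (fun x => (x - θ) * Real.exp (-(x-θ)^2/2)) (Ioi b) :=
    (int_g2.comp_sub_right θ).integrableOn
  have h4 : Tendsto (fun y : ℝ => (y-θ)^2/2) atTop atTop := by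
    have h5 : Tendsto (fun y : ℝ => y - θ) atTop atTop :=
      tendsto_atTop_add_const_right atTop (-θ) tendsto_id
    exact ((tendsto_pow_atTop two_ne_zero).comp h5).atTop_div_const two_pos
  have h3 : Tendsto (fun y : ℝ => -(y-θ)^2/2) atTop atBot := by
    have := tendsto_neg_atTop_atBot.comp h4
    refine this.congr fun y => by simp [Function.comp]; ring
  have htend : Tendsto (fun y => -Real.exp (-(y-θ)^2/2)) atTop (𝓝 0) := by
    simpa using (Real.tendsto_exp_atBot.comp h3).neg
  have := integral_Ioi_of_hasDerivAt_of_tendsto' hderiv hint htend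
  rw [this]
  ring


lemma tail_bound (θ a m : ℝ) (hm : 0 < m) (ham : θ + m ≤ a) :
    ∫ x in Ioi a, Real.exp (θ*x) * gaussianPDFReal 0 1 x
      ≤ Real.exp (θ^2/2) * Real.exp (-m^2/2) / (m * Real.sqrt (2*π)) := by
  have hsq : (0:ℝ) < Real.sqrt (2*π) := Real.sqrt_pos.mpr (by positivity)
  set K : ℝ := (Real.sqrt (2*π))⁻¹ with hK
  have hK0 : 0 < K := by positivity
  set C : ℝ := Real.exp (θ^2/2) * K / m with hC
  have hC0 : 0 < C := by positivity
  have hint_rhs : IntegrableOn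
      (fun x => C * ((x-θ) * Real.exp (-(x-θ)^2/2))) (Ioi a) :=
    ((int_g2.comp_sub_right θ).const_mul C).integrableOn
  have hint_lhs : IntegrableOn (fun x => Real.exp (θ*x) * gaussianPDFReal 0 1 x) (Ioi a) :=
    (integrable_exp_pdf1 θ).integrableOn
  have hle : ∀ x ∈ Ioi a, Real.exp (θ*x) * gaussianPDFReal 0 1 x
      ≤ C * ((x-θ) * Real.exp (-(x-θ)^2/2)) := by
    intro x hx
    have hxm : m ≤ x - θ := by
      have : a < x := hx
      linarith
    have e1 : Real.exp (θ*x) * gaussianPDFReal 0 1 x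
        = K * (Real.exp (θ^2/2) * Real.exp (-(x-θ)^2/2)) := by
      rw [pdf1_eq, mul_left_comm, ← Real.exp_add,
        show θ*x + -x^2/2 = θ^2/2 + -(x-θ)^2/2 by ring, Real.exp_add]
    rw [e1, hC, div_mul_eq_mul_div, le_div_iff₀ hm]
    have hE1 : (0:ℝ) < Real.exp (θ^2/2) := Real.exp_pos _
    have hE2 : (0:ℝ) < Real.exp (-(x-θ)^2/2) := Real.exp_pos _
    nlinarith [mul_pos (mul_pos hK0 hE1) hE2]
  calc ∫ x in Ioi a, Real.exp (θ*x) * gaussianPDFReal 0 1 x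
      ≤ ∫ x in Ioi a, C * ((x-θ) * Real.exp (-(x-θ)^2/2)) :=
        setIntegral_mono_on hint_lhs hint_rhs measurableSet_Ioi hle
    _ = C * Real.exp (-(a-θ)^2/2) := by
        rw [integral_const_mul, integral_tail_id a θ]
    _ ≤ C * Real.exp (-m^2/2) := by
        refine mul_le_mul_of_nonneg_left ?_ hC0.le
        apply Real.exp_le_exp.mpr
        nlinarith
    _ = Real.exp (θ^2/2) * Real.exp (-m^2/2) / (m * Real.sqrt (2*π)) := by
        rw [hC, hK]
        field_simp

end TFMV

open TFMV in
theorem truncated_first_moment_vanishes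
    {Ω : Type*} [MeasureSpace Ω] [IsProbabilityMeasure (ℙ : Measure Ω)]
    (β : ℝ) (hβ : 0 < β) (hβ' : β ≤ Real.sqrt (Real.log 2 / 2))
    (t : ℕ → ℝ) (ht : Tendsto t atTop atTop)
    (hsub : β < Real.sqrt (Real.log 2 / 2) →
      t =o[atTop] (fun N : ℕ => Real.sqrt N))
    (hcrit : β = Real.sqrt (Real.log 2 / 2) →
      t =o[atTop] (fun N : ℕ => Real.sqrt (Real.log N)))
    (X : Ω → ℝ) (hlaw : Measure.map X ℙ = gaussianReal 0 1)
    (Y : ℕ → Ω → ℝ)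
    (hY : ∀ N ω, Y N ω =
      (Real.exp (β * Real.sqrt N * X ω) - Real.exp (N * β ^ 2 / 2)) / Real.exp (N * β ^ 2))
    (Yt : ℕ → Ω → ℝ)
    (hYt : ∀ N ω, Yt N ω =
      if Y N ω ≤ (2 : ℝ) ^ ((N : ℝ) / 2) / t N then Y N ω else 0) :
    Tendsto (fun N : ℕ => (2 : ℝ) ^ ((N : ℝ) / 2) * (t N)⁻¹ * ∫ ω, Yt N ω)
      atTop (nhds 0) := by
  classical
  have hXm : AEMeasurable X ℙ := aemeasurable_of_map_neZero (by rw [hlaw]; infer_instance)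
  set L : ℝ := Real.log 2 / 2 with hLdef
  have hL : 0 < L := div_pos (Real.log_pos one_lt_two) two_pos
  -- eventual facts
  have hev1 : ∀ᶠ N in atTop, 1 ≤ t N := ht.eventually_ge_atTop 1
  have hev2 : ∀ᶠ N in atTop, t N ≤ Real.sqrt N := by
    rcases lt_or_eq_of_le hβ' with hlt | heq
    · filter_upwards [(hsub hlt).def one_pos] with N hN
      calc t N ≤ |t N| := le_abs_self _
        _ ≤ 1 * ‖Real.sqrt (N:ℝ)‖ := by simpa [Real.norm_eq_abs] using hN
        _ = Real.sqrt N := by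
            rw [one_mul, Real.norm_eq_abs, abs_of_nonneg (Real.sqrt_nonneg _)]
    · filter_upwards [(hcrit heq).def one_pos, eventually_ge_atTop 1] with N hN hN1
      have h1 : (1:ℝ) ≤ (N:ℝ) := by exact_mod_cast hN1
      have hlogN : Real.log N ≤ (N:ℝ) :=
        (Real.log_le_sub_one_of_pos (by linarith)).trans (by linarith)
      calc t N ≤ |t N| := le_abs_self _
        _ ≤ 1 * ‖Real.sqrt (Real.log (N:ℝ))‖ := by simpa [Real.norm_eq_abs] using hN
        _ = Real.sqrt (Real.log N) := by
            rw [one_mul, Real.norm_eq_abs, abs_of_nonneg (Real.sqrt_nonneg _)]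
        _ ≤ Real.sqrt N := Real.sqrt_le_sqrt hlogN
  have hev3 : ∀ᶠ (N:ℕ) in atTop, Real.log N ≤ (N:ℝ) * L := by
    have h := Real.isLittleO_log_id_atTop.def hL
    filter_upwards [tendsto_natCast_atTop_atTop.eventually h, eventually_ge_atTop 1]
      with N hN hN1
    have h1 : (1:ℝ) ≤ (N:ℝ) := by exact_mod_cast hN1
    calc Real.log N ≤ ‖Real.log N‖ := le_abs_self _
      _ ≤ L * ‖id ((N:ℝ))‖ := hN
      _ = (N:ℝ) * L := by
          rw [id, Real.norm_eq_abs, abs_of_nonneg (by linarith), mul_comm]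
  -- the bound sequence
  set bnd : ℕ → ℝ := fun N =>
    (Real.sqrt (2*π) * (Real.sqrt N * L / (2*β)))⁻¹ with hbnddef
  have hsqN : Tendsto (fun N : ℕ => Real.sqrt N) atTop atTop := by
    have h0 : Tendsto Real.sqrt atTop atTop := by
      rw [show Real.sqrt = fun x : ℝ => x ^ (1/(2:ℝ)) from funext Real.sqrt_eq_rpow]
      exact tendsto_rpow_atTop (by norm_num)
    exact h0.comp tendsto_natCast_atTop_atTop
  have hbnd : Tendsto bnd atTop (𝓝 0) := by
    apply Tendsto.inv_tendsto_atTop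
    have h2π : (0:ℝ) < Real.sqrt (2*π) := Real.sqrt_pos.mpr (by positivity)
    exact ((hsqN.atTop_mul_const hL).atTop_div_const (by positivity)).const_mul_atTop h2π
  apply squeeze_zero_norm' _ hbnd
  filter_upwards [hev1, hev2, hev3, eventually_ge_atTop 1] with N ht1 ht2 hlog hN1
  set n : ℝ := (N:ℝ) with hn
  have hn1 : (1:ℝ) ≤ n := by rw [hn]; exact_mod_cast hN1
  have hn0 : (0:ℝ) < n := by linarith
  have hsn : 0 < Real.sqrt n := Real.sqrt_pos.mpr hn0
  have hsnsq : Real.sqrt n ^ 2 = n := Real.sq_sqrt hn0.le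
  set θ : ℝ := β * Real.sqrt n with hθdef
  have hθ : 0 < θ := mul_pos hβ hsn
  have hθsq : θ^2 = n * β^2 := by rw [hθdef, mul_pow, hsnsq]; ring
  have ht0 : 0 < t N := lt_of_lt_of_le one_pos ht1
  set s : ℝ := Real.log (t N) with hs
  have hs0 : 0 ≤ s := Real.log_nonneg ht1
  have hsle : s ≤ Real.log n / 2 := by
    rw [hs, ← Real.log_sqrt hn0.le]
    exact Real.log_le_log ht0 ht2
  set u : ℝ := n * L - s with hu
  have hu2 : n * L / 2 ≤ u := by
    rw [hu]; linarith [hsle, hlog]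
  have hu0 : 0 < u := lt_of_lt_of_le (by positivity) hu2
  set c : ℝ := (2:ℝ) ^ (n/2) / t N with hc
  have hc0 : 0 < c := div_pos (Real.rpow_pos_of_pos two_pos _) ht0
  have hlogc : Real.log c = u := by
    rw [hc, Real.log_div (ne_of_gt (Real.rpow_pos_of_pos two_pos _)) (ne_of_gt ht0),
      Real.log_rpow two_pos, hu, hs, hLdef]
    ring
  have hexpu : c = Real.exp u := by rw [← hlogc, Real.exp_log hc0]
  set m : ℝ := u / θ with hm
  have hm0 : 0 < m := div_pos hu0 hθ
  have hmθ : m * θ = u := div_mul_cancel₀ _ (ne_of_gt hθ)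
  have hmsq : m^2 * (n * β^2) = u^2 := by
    rw [← hθsq]
    calc m^2 * θ^2 = (m*θ)^2 := by ring
      _ = u^2 := by rw [hmθ]
  have hmge : Real.sqrt n * L / (2*β) ≤ m := by
    rw [hm, hθdef, div_le_div_iff₀ (by positivity) (by positivity)]
    have he : Real.sqrt n * Real.sqrt n = n := Real.mul_self_sqrt hn0.le
    calc Real.sqrt n * L * (β * Real.sqrt n)
        = β * (Real.sqrt n * Real.sqrt n * L) := by ring
      _ = β * (n * L) := by rw [he]
      _ ≤ β * (2 * u) := mul_le_mul_of_nonneg_left (by linarith) hβ.le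
      _ = u * (2 * β) := by ring
  set κ : ℝ := Real.exp (n * β^2/2) with hκ
  set E : ℝ := Real.exp (n * β^2) with hE
  have hκ0 : 0 < κ := Real.exp_pos _
  have hE0 : 0 < E := Real.exp_pos _
  have hS0 : 0 < κ + c * E := by positivity
  set a : ℝ := Real.log (κ + c * E) / θ with ha
  have haθ : θ + m ≤ a := by
    rw [ha, le_div_iff₀ hθ]
    have h1 : u + n * β^2 = Real.log (c * E) := by
      rw [Real.log_mul (ne_of_gt hc0) (ne_of_gt hE0), hlogc, hE, Real.log_exp]
    have h2 : Real.log (c*E) ≤ Real.log (κ + c*E) :=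
      Real.log_le_log (by positivity) (by linarith)
    have h3 : (θ + m) * θ = θ^2 + u := by rw [add_mul, hmθ, ← pow_two]
    rw [h3, hθsq]; linarith
  set yf : ℝ → ℝ := fun x => (Real.exp (θ * x) - κ) / E with hyf
  have hyfm : Measurable yf := ((measurable_id.const_mul θ).exp.sub_const κ).div_const E
  set g : ℝ → ℝ := fun x => if yf x ≤ c then yf x else 0 with hg
  have hgm : Measurable g :=
    Measurable.ite (measurableSet_le hyfm measurable_const) hyfm measurable_const
  have hYt_eq : ∀ ω, Yt N ω = g (X ω) := by
    intro ω; rw [hYt N ω, hY N ω, hg]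
  have hint_Yt : ∫ ω, Yt N ω = ∫ x, g x ∂(gaussianReal 0 1) := by
    rw [show (∫ ω, Yt N ω) = ∫ ω, g (X ω) from
      integral_congr_ae (Filter.Eventually.of_forall hYt_eq)]
    rw [← hlaw, integral_map hXm hgm.aestronglyMeasurable]
  have hiff : ∀ x : ℝ, (yf x ≤ c ↔ x ≤ a) := by
    intro x
    have h1 : yf x ≤ c ↔ Real.exp (θ*x) ≤ κ + c * E := by
      rw [hyf]; simp only
      rw [div_le_iff₀ hE0]
      constructor <;> intro <;> linarith
    have h2 : Real.exp (θ*x) ≤ κ + c*E ↔ θ * x ≤ Real.log (κ + c*E) := by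
      conv_lhs => rw [← Real.exp_log hS0]
      rw [Real.exp_le_exp]
    have h3 : θ * x ≤ Real.log (κ + c*E) ↔ x ≤ a := by
      rw [ha, le_div_iff₀ hθ, mul_comm]
    exact h1.trans (h2.trans h3)
  have hexp_int : Integrable (fun x => Real.exp (θ*x)) (gaussianReal 0 1) :=
    integrable_gauss (integrable_exp_pdf1 θ)
  have hyf_int : Integrable yf (gaussianReal 0 1) := by
    rw [hyf]
    exact (hexp_int.sub (integrable_const κ)).div_const E
  have hexp_mean : ∫ x, Real.exp (θ*x) ∂(gaussianReal 0 1) = κ := by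
    rw [integral_gauss, integral_exp_pdf1, hκ, hθsq]
  have hmean : ∫ x, yf x ∂(gaussianReal 0 1) = 0 := by
    rw [hyf]; simp only
    rw [integral_div, integral_sub hexp_int (integrable_const κ), hexp_mean, integral_const]
    simp
  have hsplit : ∫ x, g x ∂(gaussianReal 0 1) = - ∫ x in Ioi a, yf x ∂(gaussianReal 0 1) := by
    have hind : g = (Iic a).indicator yf := by
      funext x; rw [indicator_apply, hg]; simp only [Set.mem_Iic]
      by_cases h : yf x ≤ c
      · rw [if_pos h, if_pos ((hiff x).mp h)]
      · rw [if_neg h, if_neg (fun hx => h ((hiff x).mpr hx))]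
    have h2 := integral_add_compl (s := Iic a) (μ := gaussianReal 0 1) measurableSet_Iic hyf_int (f := yf)
    rw [compl_Iic, hmean] at h2
    rw [hind, integral_indicator measurableSet_Iic]
    linarith
  have hI0 : 0 ≤ ∫ x in Ioi a, yf x ∂(gaussianReal 0 1) := by
    apply setIntegral_nonneg measurableSet_Ioi
    intro x hx
    have hnle : ¬ (yf x ≤ c) := fun h => absurd ((hiff x).mp h) (not_le.mpr hx)
    linarith [not_le.mp hnle, hc0]
  have hIle : ∫ x in Ioi a, yf x ∂(gaussianReal 0 1)
      ≤ E⁻¹ * (Real.exp (θ^2/2) * Real.exp (-m^2/2) / (m * Real.sqrt (2*π))) := by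
    have step1 : ∫ x in Ioi a, yf x ∂(gaussianReal 0 1)
        ≤ ∫ x in Ioi a, Real.exp (θ*x) / E ∂(gaussianReal 0 1) := by
      apply setIntegral_mono_on hyf_int.integrableOn
        (hexp_int.div_const E).integrableOn measurableSet_Ioi
      intro x _
      rw [hyf]; simp only
      gcongr
      linarith
    have step2 : ∫ x in Ioi a, Real.exp (θ*x) / E ∂(gaussianReal 0 1)
        = E⁻¹ * ∫ x in Ioi a, Real.exp (θ*x) ∂(gaussianReal 0 1) := by
      simp_rw [div_eq_inv_mul]
      exact integral_const_mul _ _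
    have step3 : ∫ x in Ioi a, Real.exp (θ*x) ∂(gaussianReal 0 1)
        = ∫ x in Ioi a, Real.exp (θ*x) * gaussianPDFReal 0 1 x :=
      setIntegral_gauss _ measurableSet_Ioi
    calc ∫ x in Ioi a, yf x ∂(gaussianReal 0 1)
        ≤ ∫ x in Ioi a, Real.exp (θ*x) / E ∂(gaussianReal 0 1) := step1
      _ = E⁻¹ * ∫ x in Ioi a, Real.exp (θ*x) * gaussianPDFReal 0 1 x := by
          rw [step2, step3]
      _ ≤ E⁻¹ * (Real.exp (θ^2/2) * Real.exp (-m^2/2) / (m * Real.sqrt (2*π))) := by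
          exact mul_le_mul_of_nonneg_left (tail_bound θ a m hm0 haθ) (inv_nonneg.mpr hE0.le)
  have hprod : c * E⁻¹ * Real.exp (θ^2/2) * Real.exp (-m^2/2) ≤ 1 := by
    rw [hexpu, hE, ← Real.exp_neg, ← Real.exp_add, ← Real.exp_add, ← Real.exp_add]
    rw [Real.exp_le_one_iff, hθsq]
    have hb2 : (0:ℝ) < 2*(n * β^2) := by positivity
    have h4 : u - n*β^2 + n*β^2/2 - m^2/2 ≤ 0 := by
      have h5 : (2*(n*β^2)) * (u - n*β^2 + n*β^2/2 - m^2/2) = -(u - n*β^2)^2 := by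
        linear_combination (-1 : ℝ) * hmsq
      have h6 : (2*(n*β^2)) * (u - n*β^2 + n*β^2/2 - m^2/2) ≤ (2*(n*β^2)) * 0 := by
        rw [h5, mul_zero]
        exact neg_nonpos_of_nonneg (sq_nonneg _)
      exact le_of_mul_le_mul_left h6 hb2
    linarith [h4]
  have hseq : (2:ℝ)^(n/2) * (t N)⁻¹ * ∫ ω, Yt N ω
      = -(c * ∫ x in Ioi a, yf x ∂(gaussianReal 0 1)) := by
    rw [hint_Yt, hsplit, hc, div_eq_mul_inv]
    ring
  rw [Real.norm_eq_abs, hseq, abs_neg, abs_of_nonneg (mul_nonneg hc0.le hI0)]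
  show c * ∫ x in Ioi a, yf x ∂(gaussianReal 0 1)
      ≤ (Real.sqrt (2*π) * (Real.sqrt n * L / (2*β)))⁻¹
  have h2π : (0:ℝ) < Real.sqrt (2*π) := Real.sqrt_pos.mpr (by positivity)
  calc c * ∫ x in Ioi a, yf x ∂(gaussianReal 0 1)
      ≤ c * (E⁻¹ * (Real.exp (θ^2/2) * Real.exp (-m^2/2) / (m * Real.sqrt (2*π)))) :=
        mul_le_mul_of_nonneg_left hIle hc0.le
    _ = (c * E⁻¹ * Real.exp (θ^2/2) * Real.exp (-m^2/2)) * (m * Real.sqrt (2*π))⁻¹ := by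
        rw [div_eq_mul_inv]; ring
    _ ≤ 1 * (m * Real.sqrt (2*π))⁻¹ :=
        mul_le_mul_of_nonneg_right hprod (inv_nonneg.mpr (by positivity))
    _ = (m * Real.sqrt (2*π))⁻¹ := one_mul _
    _ ≤ (Real.sqrt (2*π) * (Real.sqrt n * L / (2*β)))⁻¹ := by
        apply inv_anti₀ (by positivity)
        calc Real.sqrt (2*π) * (Real.sqrt n * L / (2*β))
            ≤ Real.sqrt (2*π) * m := by
              exact mul_le_mul_of_nonneg_left hmge h2π.le
          _ = m * Real.sqrt (2*π) := mul_comm _ _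
end

section
/- Let 0 < β < √(log 2 / 2), let t_N → ∞ with liminf t_N/√N > 0, and let γ_N → ∞ with γ_N = o(N). Then for every ε > 0, lim_{N→∞} (1/γ_N) log P( | e^{(N/2)(log 2 - β^2)} t_N^{-1} log(Z_N / E Z_N) | > ε ) = -∞, where Z_N = ∑_{σ ∈ {-1,1}^N} exp(β√N X_σ) with X_σ i.i.d. standard Gaussians. -/
open MeasureTheory ProbabilityTheory Filter Real Asymptotics

section AuxREM

lemma rem_pdf_mul_exp (s x : ℝ) :
    gaussianPDFReal 0 1 x * Real.exp (s*x) = Real.exp (s^2/2) * gaussianPDFReal s 1 x := by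
  simp only [gaussianPDFReal, NNReal.coe_one, mul_one, sub_zero]
  rw [mul_assoc, ← Real.exp_add, mul_comm (Real.exp (s^2/2)), mul_assoc, ← Real.exp_add]
  ring_nf

lemma rem_gauss_wd : gaussianReal 0 1
    = MeasureTheory.volume.withDensity (fun x => ((gaussianPDFReal 0 1 x).toNNReal : ENNReal)) := by
  rw [gaussianReal_of_var_ne_zero 0 one_ne_zero]
  rfl

lemma rem_pdf_key (s : ℝ) : ∀ x : ℝ, ((gaussianPDFReal 0 1 x).toNNReal : ℝ) * Real.exp (s*x)
    = Real.exp (s^2/2) * gaussianPDFReal s 1 x := by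
  intro x
  rw [Real.coe_toNNReal _ (gaussianPDFReal_nonneg 0 1 x), rem_pdf_mul_exp]

lemma rem_exp_mul_gauss_integrable (s : ℝ) :
    Integrable (fun x => Real.exp (s*x)) (gaussianReal 0 1) := by
  rw [rem_gauss_wd, integrable_withDensity_iff_integrable_smul
    ((measurable_gaussianPDFReal 0 1).real_toNNReal)]
  simp only [NNReal.smul_def, smul_eq_mul, rem_pdf_key s]
  exact (integrable_gaussianPDFReal s 1).const_mul _

lemma rem_exp_mul_gauss_integral (s : ℝ) :
    ∫ x, Real.exp (s*x) ∂(gaussianReal 0 1) = Real.exp (s^2/2) := by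
  rw [rem_gauss_wd, integral_withDensity_eq_integral_smul
    ((measurable_gaussianPDFReal 0 1).real_toNNReal)]
  simp only [NNReal.smul_def, smul_eq_mul, rem_pdf_key s]
  rw [integral_const_mul, integral_gaussianPDFReal_eq_one s one_ne_zero, mul_one]

lemma rem_gauss_tail {c : ℝ} (hc : 0 ≤ c) :
    ((gaussianReal 0 1) {x | c ≤ x}).toReal ≤ Real.exp (-(c^2/2)) := by
  have h := measure_ge_le_exp_mul_mgf (μ := gaussianReal 0 1) (X := fun x => x) c hc
    (rem_exp_mul_gauss_integrable c)
  have hm : mgf (fun x => x) (gaussianReal 0 1) c = Real.exp (c^2/2) :=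
    rem_exp_mul_gauss_integral c
  rw [hm, ← Real.exp_add] at h
  refine h.trans (le_of_eq ?_)
  congr 1
  ring

lemma rem_gauss_Ioi_ne_zero (K : ℝ) : gaussianReal 0 1 (Set.Ioi K) ≠ 0 := by
  intro h
  have h2 := gaussianReal_absolutelyContinuous' 0 one_ne_zero h
  rw [Real.volume_Ioi] at h2
  exact ENNReal.top_ne_zero h2

lemma rem_exp_le_quadratic {x : ℝ} (hx : |x| ≤ 1) : Real.exp x ≤ 1 + x + x^2 := by
  have h := Real.exp_bound hx (by norm_num : 0 < 2)
  have h2 : ∑ i ∈ Finset.range 2, x^i / (Nat.factorial i) = 1 + x := by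
    simp [Finset.sum_range_succ]
  rw [h2] at h
  have h3 := (abs_le.mp h).2
  norm_num [Nat.factorial] at h3
  nlinarith [sq_abs x, sq_nonneg x]

lemma rem_exp_neg_le {x : ℝ} (h0 : 0 ≤ x) (h1 : x ≤ 1) : Real.exp (-x) ≤ 1 - x/2 := by
  have h2 : Real.exp (-x) ≤ 1/(1+x) := by
    rw [Real.exp_neg, one_div]
    exact inv_anti₀ (by linarith) (by linarith [Real.add_one_le_exp x])
  have h3 : 1/(1+x) ≤ 1 - x/2 := by
    rw [div_le_iff₀ (by linarith)]
    nlinarith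
  linarith

lemma rem_iIndepFun_ae_eq {Ω : Type*} [MeasureSpace Ω] {μ : Measure Ω} {ι : Type*}
    {f g : ι → Ω → ℝ}
    (hf : iIndepFun f μ) (hfg : ∀ i, f i =ᵐ[μ] g i) :
    iIndepFun g μ := by
  rw [iIndepFun_iff_measure_inter_preimage_eq_mul] at hf ⊢
  intro S sets hsets
  have h1 : (⋂ i ∈ S, g i ⁻¹' sets i) =ᵐ[μ] (⋂ i ∈ S, f i ⁻¹' sets i) := by
    have hS : ∀ᵐ ω ∂μ, ∀ i ∈ (S : Set ι), f i ω = g i ω :=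
      (MeasureTheory.ae_ball_iff S.countable_toSet).2 (fun i _ => hfg i)
    filter_upwards [hS] with ω hω
    replace hω : ∀ i ∈ S, f i ω = g i ω := fun i hi => hω i (by exact_mod_cast hi)
    show (ω ∈ ⋂ i ∈ S, g i ⁻¹' sets i) = (ω ∈ ⋂ i ∈ S, f i ⁻¹' sets i)
    simp only [Set.mem_iInter, Set.mem_preimage]
    exact propext (forall₂_congr fun i hi => by rw [hω i hi])
  rw [measure_congr h1, hf S hsets]
  refine Finset.prod_congr rfl fun i hi => ?_
  refine measure_congr ?_
  filter_upwards [hfg i] with ω hω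
  show (f i ω ∈ sets i) = (g i ω ∈ sets i)
  rw [hω]

lemma rem_integrable_of_bdd {Ω : Type*} [MeasurableSpace Ω] {μ : Measure Ω}
    [IsProbabilityMeasure μ]
    {f : Ω → ℝ} (hf : AEStronglyMeasurable f μ) {C : ℝ} (h : ∀ ω, |f ω| ≤ C) :
    Integrable f μ := Integrable.mono' (integrable_const C) hf (ae_of_all _ h)

lemma rem_mgf_le_of_bounded {Ω : Type*} [MeasurableSpace Ω] {μ : Measure Ω}
    [IsProbabilityMeasure μ]
    {W : Ω → ℝ} (hW : Measurable W) {b : ℝ} (hb0 : 0 ≤ b)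
    (h0 : ∀ ω, 0 ≤ W ω) (hb : ∀ ω, W ω ≤ b)
    {θ : ℝ} (hθ : |θ| * b ≤ 1) :
    mgf W μ θ ≤ Real.exp (θ * (∫ ω, W ω ∂μ) + θ^2 * (∫ ω, (W ω)^2 ∂μ)) := by
  set m := ∫ ω, W ω ∂μ with hm
  have hWi : Integrable W μ := rem_integrable_of_bdd hW.aestronglyMeasurable
    (fun ω => abs_le.2 ⟨by linarith [h0 ω], hb ω⟩)
  have hW2i : Integrable (fun ω => (W ω)^2) μ := rem_integrable_of_bdd
    (hW.pow_const 2).aestronglyMeasurable (C := b^2)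
    (fun ω => by rw [abs_of_nonneg (sq_nonneg _)]; nlinarith [h0 ω, hb ω])
  have hm0 : 0 ≤ m := integral_nonneg h0
  have hmb : m ≤ b := by
    calc m ≤ ∫ _ω, b ∂μ := integral_mono hWi (integrable_const b) hb
    _ = b := by simp
  have hpt : ∀ ω, Real.exp (θ * W ω) ≤
      Real.exp (θ * m) * (1 + θ * (W ω - m) + θ^2 * (W ω - m)^2) := by
    intro ω
    have habs : |θ * (W ω - m)| ≤ 1 := by
      rw [abs_mul]
      calc |θ| * |W ω - m| ≤ |θ| * b := by
            have : |W ω - m| ≤ b := abs_le.2 ⟨by linarith [h0 ω], by linarith [hb ω]⟩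
            exact mul_le_mul_of_nonneg_left this (abs_nonneg θ)
      _ ≤ 1 := hθ
    have h1 : Real.exp (θ * W ω) = Real.exp (θ * m) * Real.exp (θ * (W ω - m)) := by
      rw [← Real.exp_add]; ring_nf
    rw [h1]
    refine mul_le_mul_of_nonneg_left ?_ (Real.exp_nonneg _)
    calc Real.exp (θ * (W ω - m)) ≤ 1 + θ * (W ω - m) + (θ * (W ω - m))^2 :=
          rem_exp_le_quadratic habs
    _ = 1 + θ * (W ω - m) + θ^2 * (W ω - m)^2 := by ring
  have hint2 : Integrable
      (fun ω => Real.exp (θ * m) * (1 + θ * (W ω - m) + θ^2 * (W ω - m)^2)) μ := by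
    apply Integrable.const_mul
    apply Integrable.add
    · exact (integrable_const 1).add ((hWi.sub (integrable_const m)).const_mul θ)
    · have : (fun ω => θ^2 * (W ω - m)^2) = fun ω => θ^2 * ((W ω)^2 - 2*m*(W ω) + m^2) := by
        funext ω; ring
      rw [this]
      exact ((hW2i.sub ((hWi.const_mul (2*m)))).add (integrable_const (m^2))).const_mul _
  have hexpint : Integrable (fun ω => Real.exp (θ * W ω)) μ := by
    refine rem_integrable_of_bdd ((hW.const_mul θ).exp).aestronglyMeasurable
      (C := Real.exp (|θ| * b)) fun ω => ?_
    rw [abs_of_nonneg (Real.exp_nonneg _)]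
    apply Real.exp_le_exp.2
    calc θ * W ω ≤ |θ * W ω| := le_abs_self _
    _ = |θ| * |W ω| := abs_mul _ _
    _ ≤ |θ| * b := mul_le_mul_of_nonneg_left (abs_le.2 ⟨by linarith [h0 ω], hb ω⟩) (abs_nonneg _)
  have hstep : mgf W μ θ ≤ Real.exp (θ * m) * (1 + θ^2 * ((∫ ω, (W ω)^2 ∂μ) - m^2)) := by
    rw [mgf]
    calc ∫ ω, Real.exp (θ * W ω) ∂μ
        ≤ ∫ ω, Real.exp (θ * m) * (1 + θ * (W ω - m) + θ^2 * (W ω - m)^2) ∂μ :=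
          integral_mono hexpint hint2 hpt
    _ = Real.exp (θ * m) * (1 + θ^2 * ((∫ ω, (W ω)^2 ∂μ) - m^2)) := by
        rw [integral_const_mul]
        congr 1
        have heq : (fun ω => 1 + θ * (W ω - m) + θ^2 * (W ω - m)^2)
            = fun ω => (1 + θ*(W ω) - θ*m - 2*θ^2*m*(W ω) + θ^2*m^2) + θ^2 * (W ω)^2 := by
          funext ω; ring
        rw [heq, integral_add ?ha (hW2i.const_mul _), integral_const_mul]
        case ha =>
          have h6 : (fun ω => 1 + θ*(W ω) - θ*m - 2*θ^2*m*(W ω) + θ^2*m^2)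
              = fun ω => (1 - θ*m + θ^2*m^2) + (θ - 2*θ^2*m) * W ω := by funext ω; ring
          rw [h6]
          exact (integrable_const _).add (hWi.const_mul _)
        have h5 : (fun ω => 1 + θ*(W ω) - θ*m - 2*θ^2*m*(W ω) + θ^2*m^2)
            = fun ω => (1 - θ*m + θ^2*m^2) + (θ - 2*θ^2*m) * W ω := by funext ω; ring
        rw [h5, integral_add (integrable_const _) (hWi.const_mul _), integral_const,
          integral_const_mul]
        simp only [measure_univ, ENNReal.toReal_one, probReal_univ, smul_eq_mul, one_mul]
        ring
  refine hstep.trans ?_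
  rw [Real.exp_add]
  refine mul_le_mul_of_nonneg_left ?_ (Real.exp_nonneg _)
  calc 1 + θ^2 * ((∫ ω, (W ω)^2 ∂μ) - m^2)
      ≤ 1 + θ^2 * (∫ ω, (W ω)^2 ∂μ) := by nlinarith [sq_nonneg θ, sq_nonneg m]
  _ ≤ Real.exp (θ^2 * (∫ ω, (W ω)^2 ∂μ)) := by
      linarith [Real.add_one_le_exp (θ^2 * (∫ ω, (W ω)^2 ∂μ))]

lemma rem_sum_dev_bound {Ω : Type*} [MeasurableSpace Ω] {μ : Measure Ω} [IsProbabilityMeasure μ]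
    {ι : Type*} [Fintype ι] [Nonempty ι] {W : ι → Ω → ℝ}
    (hWm : ∀ i, Measurable (W i))
    (hindep : iIndepFun W μ)
    {b : ℝ} (hb0 : 0 < b) (h0 : ∀ i ω, 0 ≤ W i ω) (hb : ∀ i ω, W i ω ≤ b)
    {m1 m2 : ℝ} (hm1 : ∀ i, ∫ ω, W i ω ∂μ = m1) (hm2 : ∀ i, ∫ ω, (W i ω)^2 ∂μ = m2)
    {v : ℝ} (hv : m2 ≤ v) (hv0 : 0 < v)
    {u : ℝ} (hu : 0 < u) :
    (μ {ω | u ≤ |(∑ i, W i ω) - (Fintype.card ι : ℝ) * m1|}).toReal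
      ≤ 2 * Real.exp (-(min (u^2/(3 * (Fintype.card ι : ℝ) * v)) (u/b))/2) := by
  classical
  set n : ℝ := (Fintype.card ι : ℝ) with hn
  have hn0 : 0 < n := by
    simp only [hn, Nat.cast_pos]
    exact Fintype.card_pos
  set lam : ℝ := min (u/(3*n*v)) (1/b) with hlam
  have hlam0 : 0 < lam := lt_min (by positivity) (by positivity)
  have hlamb : lam * b ≤ 1 := by
    calc lam * b ≤ (1/b) * b := mul_le_mul_of_nonneg_right (min_le_right _ _) hb0.le
    _ = 1 := by field_simp
  have hm2nonneg : 0 ≤ m2 := by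
    rw [← hm2 (Classical.arbitrary ι)]
    exact integral_nonneg fun ω => sq_nonneg _
  have hS : ∀ θ : ℝ, |θ| = lam →
      mgf (∑ i, W i) μ θ ≤ Real.exp (θ * (n * m1) + lam^2 * n * m2) := by
    intro θ hθ
    rw [hindep.mgf_sum hWm Finset.univ]
    have hbd : ∀ i ∈ Finset.univ, mgf (W i) μ θ ≤ Real.exp (θ * m1 + θ^2 * m2) := by
      intro i _
      have := rem_mgf_le_of_bounded (μ := μ) (hWm i) hb0.le (h0 i) (hb i) (θ := θ)
        (by rw [hθ]; exact hlamb)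
      rwa [hm1 i, hm2 i] at this
    calc ∏ i, mgf (W i) μ θ ≤ ∏ _i : ι, Real.exp (θ * m1 + θ^2 * m2) :=
          Finset.prod_le_prod (fun i _ => by exact mgf_nonneg) hbd
    _ = Real.exp (θ * m1 + θ^2 * m2) ^ (Fintype.card ι) := by
        rw [Finset.prod_const, Finset.card_univ]
    _ = Real.exp ((Fintype.card ι : ℝ) * (θ * m1 + θ^2 * m2)) := by
        rw [← Real.exp_nat_mul]
    _ = Real.exp (θ * (n * m1) + lam^2 * n * m2) := by
        congr 1
        have : θ^2 = lam^2 := by rw [← sq_abs θ, hθ]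
        rw [← hn, this]; ring
  have hSm : Measurable (∑ i, W i) := by
    have : (∑ i, W i) = fun ω => ∑ i, W i ω := by
      funext ω; exact Finset.sum_apply ω Finset.univ W
    rw [this]
    exact Finset.measurable_sum Finset.univ fun i _ => hWm i
  have hSint : ∀ θ : ℝ, Integrable (fun ω => Real.exp (θ * (∑ i, W i) ω)) μ := by
    intro θ
    refine rem_integrable_of_bdd ((hSm.const_mul θ).exp).aestronglyMeasurable
      (C := Real.exp (|θ| * (n * b))) fun ω => ?_
    rw [abs_of_nonneg (Real.exp_nonneg _)]
    apply Real.exp_le_exp.2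
    have h1 : (∑ i, W i) ω = ∑ i, W i ω := Finset.sum_apply ω Finset.univ W
    have h2 : |(∑ i, W i) ω| ≤ n * b := by
      rw [h1, abs_of_nonneg (Finset.sum_nonneg fun i _ => h0 i ω)]
      calc ∑ i, W i ω ≤ ∑ _i : ι, b := Finset.sum_le_sum fun i _ => hb i ω
      _ = n * b := by rw [Finset.sum_const, Finset.card_univ, nsmul_eq_mul]
    calc θ * (∑ i, W i) ω ≤ |θ * (∑ i, W i) ω| := le_abs_self _
    _ = |θ| * |(∑ i, W i) ω| := abs_mul _ _
    _ ≤ |θ| * (n * b) := mul_le_mul_of_nonneg_left h2 (abs_nonneg _)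
  have hexp_le : -lam * u + lam^2 * n * v ≤ -(lam * u)/2 := by
    have h1 : lam^2 * n * v ≤ (lam * u)/3 := by
      have hthis : lam ≤ u/(3*n*v) := min_le_left _ _
      have h2 : lam * (3*n*v) ≤ u := by
        have h3 : (u/(3*n*v)) * (3*n*v) = u := by field_simp
        calc lam * (3*n*v) ≤ (u/(3*n*v)) * (3*n*v) :=
              mul_le_mul_of_nonneg_right hthis (by positivity)
        _ = u := h3
      nlinarith
    nlinarith
  have hup : (μ {ω | n * m1 + u ≤ (∑ i, W i) ω}).toReal ≤ Real.exp (-(lam * u)/2) := by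
    have h := measure_ge_le_exp_mul_mgf (μ := μ) (X := ∑ i, W i) (n * m1 + u) hlam0.le
      (hSint lam)
    refine h.trans ?_
    calc Real.exp (-lam * (n*m1+u)) * mgf (∑ i, W i) μ lam
        ≤ Real.exp (-lam * (n*m1+u)) * Real.exp (lam * (n * m1) + lam^2 * n * m2) :=
          mul_le_mul_of_nonneg_left (hS lam (abs_of_pos hlam0)) (Real.exp_nonneg _)
    _ = Real.exp (-lam * u + lam^2 * n * m2) := by rw [← Real.exp_add]; congr 1; ring
    _ ≤ Real.exp (-(lam*u)/2) := by
        apply Real.exp_le_exp.2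
        have h4 : lam^2 * n * m2 ≤ lam^2 * n * v := by
          have h5 : (0:ℝ) ≤ lam^2 * n := by positivity
          calc lam^2*n*m2 = (lam^2*n)*m2 := by ring
          _ ≤ (lam^2*n)*v := mul_le_mul_of_nonneg_left hv h5
          _ = lam^2*n*v := by ring
        linarith
  have hlo : (μ {ω | (∑ i, W i) ω ≤ n * m1 - u}).toReal ≤ Real.exp (-(lam * u)/2) := by
    have h := measure_le_le_exp_mul_mgf (μ := μ) (X := ∑ i, W i) (n * m1 - u)
      (neg_nonpos.2 hlam0.le) (hSint (-lam))
    refine h.trans ?_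
    calc Real.exp (-(-lam) * (n*m1-u)) * mgf (∑ i, W i) μ (-lam)
        ≤ Real.exp (lam * (n*m1-u)) * Real.exp ((-lam) * (n * m1) + lam^2 * n * m2) := by
          rw [neg_neg]
          exact mul_le_mul_of_nonneg_left (hS (-lam) (by rw [abs_neg, abs_of_pos hlam0]))
            (Real.exp_nonneg _)
    _ = Real.exp (-lam * u + lam^2 * n * m2) := by rw [← Real.exp_add]; congr 1; ring
    _ ≤ Real.exp (-(lam*u)/2) := by
        apply Real.exp_le_exp.2
        have h4 : lam^2 * n * m2 ≤ lam^2 * n * v := by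
          have h5 : (0:ℝ) ≤ lam^2 * n := by positivity
          calc lam^2*n*m2 = (lam^2*n)*m2 := by ring
          _ ≤ (lam^2*n)*v := mul_le_mul_of_nonneg_left hv h5
          _ = lam^2*n*v := by ring
        linarith
  have hsub : {ω | u ≤ |(∑ i, W i ω) - n * m1|}
      ⊆ {ω | n * m1 + u ≤ (∑ i, W i) ω} ∪ {ω | (∑ i, W i) ω ≤ n * m1 - u} := by
    intro ω hω
    simp only [Set.mem_setOf_eq] at hω
    have h1 : (∑ i, W i) ω = ∑ i, W i ω := Finset.sum_apply ω Finset.univ W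
    rcases le_abs.mp hω with h | h
    · left
      show n * m1 + u ≤ (∑ i, W i) ω
      rw [h1]; linarith
    · right
      show (∑ i, W i) ω ≤ n * m1 - u
      rw [h1]; linarith
  have hlamu : lam * u = min (u^2/(3*n*v)) (u/b) := by
    have e1 : (u/(3*n*v))*u = u^2/(3*n*v) := by ring
    have e2 : (1/b)*u = u/b := by ring
    rcases le_total (u/(3*n*v)) (1/b) with h | h
    · rw [hlam, min_eq_left h, min_eq_left]
      · ring
      · rw [← e1, ← e2]
        exact mul_le_mul_of_nonneg_right h hu.le
    · rw [hlam, min_eq_right h, min_eq_right]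
      · ring
      · rw [← e1, ← e2]
        exact mul_le_mul_of_nonneg_right h hu.le
  calc (μ {ω | u ≤ |(∑ i, W i ω) - n * m1|}).toReal
      ≤ ((μ {ω | n * m1 + u ≤ (∑ i, W i) ω}) + μ {ω | (∑ i, W i) ω ≤ n * m1 - u}).toReal := by
        refine ENNReal.toReal_mono
          (ENNReal.add_ne_top.2 ⟨measure_ne_top _ _, measure_ne_top _ _⟩) ?_
        exact (measure_mono hsub).trans (measure_union_le _ _)
  _ = (μ {ω | n * m1 + u ≤ (∑ i, W i) ω}).toReal
      + (μ {ω | (∑ i, W i) ω ≤ n * m1 - u}).toReal :=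
        ENNReal.toReal_add (measure_ne_top _ _) (measure_ne_top _ _)
  _ ≤ Real.exp (-(lam*u)/2) + Real.exp (-(lam*u)/2) := add_le_add hup hlo
  _ = 2 * Real.exp (-(min (u^2/(3 * n * v)) (u/b))/2) := by rw [← hlamu]; ring

lemma rem_ev_linear_le_exp {k : ℝ} (C : ℝ) (hk : 0 < k) :
    ∀ᶠ n : ℕ in atTop, C * n ≤ Real.exp (k*n) := by
  have h2 : Tendsto (fun x : ℝ => k*x) atTop atTop := tendsto_id.const_mul_atTop hk
  have h3 : Tendsto (fun y : ℝ => Real.exp y / y) atTop atTop := by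
    simpa using Real.tendsto_exp_div_pow_atTop 1
  have h4 : Tendsto (fun n : ℕ => Real.exp (k*n) / (k*n)) atTop atTop :=
    (h3.comp h2).comp tendsto_natCast_atTop_atTop
  filter_upwards [h4.eventually_ge_atTop (C/k), Filter.eventually_gt_atTop 0] with n hn hn0
  have hn0' : (0:ℝ) < n := by exact_mod_cast hn0
  have h5 : (C/k) * (k*n) ≤ (Real.exp (k*n)/(k*n)) * (k*n) :=
    mul_le_mul_of_nonneg_right hn (by positivity)
  rw [div_mul_cancel₀ _ (by positivity : (k*(n:ℝ)) ≠ 0)] at h5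
  calc C * n = (C/k)*(k*n) := by field_simp
  _ ≤ Real.exp (k*n) := h5

end AuxREM

set_option maxHeartbeats 1000000 in
theorem rem_moderate_deviations_overscaled
    {Ω : Type*} [MeasureSpace Ω] [IsProbabilityMeasure (ℙ : Measure Ω)]
    (β : ℝ) (hβ : 0 < β) (hβ' : β < Real.sqrt (Real.log 2 / 2))
    (t γ : ℕ → ℝ)
    (ht : Tendsto t atTop atTop)
    (hliminf : 0 < Filter.liminf (fun N : ℕ => t N / Real.sqrt N) atTop)
    (hγ : Tendsto γ atTop atTop)
    (hγo : γ =o[atTop] (fun N => (N : ℝ)))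
    (X : (N : ℕ) → (Fin N → Bool) → Ω → ℝ)
    (hlaw : ∀ N σ, Measure.map (X N σ) ℙ = gaussianReal 0 1)
    (hindep : ∀ N, iIndepFun (X N) ℙ)
    (Z : ℕ → Ω → ℝ)
    (hZ : ∀ N ω, Z N ω = ∑ σ : Fin N → Bool, Real.exp (β * Real.sqrt N * X N σ ω))
    (EZ : ℕ → ℝ) (hEZ : ∀ N, EZ N = ∫ ω, Z N ω) :
    ∀ ε > (0 : ℝ),
      Tendsto (fun N : ℕ =>
          (1 / γ N) *
            Real.log ((ℙ {ω |
                ε < |Real.exp ((N : ℝ) / 2 * (Real.log 2 - β ^ 2)) / t N *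
                      Real.log (Z N ω / EZ N)|}).toReal))
        atTop atBot := by
  intro ε hε
  -- basic constants
  have hL : 0 < Real.log 2 := Real.log_pos (by norm_num)
  set L := Real.log 2 with hLdef
  have hβ2 : β^2 < L/2 := by
    have h := (Real.lt_sqrt hβ.le).1 hβ'
    simpa using h
  obtain ⟨d, hd, hd0⟩ : ∃ d : ℝ, d * (2*β) = L ∧ 0 < d :=
    ⟨L/(2*β), by field_simp, by positivity⟩
  have haM0 : 0 < β + d := by positivity
  have hsqp : (0:ℝ) < L - 2*β^2 := by linarith only [hβ2]
  have h9 : (0:ℝ) < (L-2*β^2)^2 := pow_pos hsqp 2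
  have hd2 : d^2*(4*β^2) = L^2 := by rw [← hd]; ring
  have hβ2pos : (0:ℝ) < β^2 := pow_pos hβ 2
  have hkey : L - β^2 < d^2 := by nlinarith only [h9, hd2, hβ2pos]
  have h1 : Real.sqrt (2*L) < β + d := by
    rw [Real.sqrt_lt' haM0]
    nlinarith only [hkey, hd]
  have hLβ : (0:ℝ) ≤ L - β^2 := by linarith only [hβ2, hL]
  have h2 : β + Real.sqrt (L - β^2) < β + d := by
    have h2' : Real.sqrt (L - β^2) < d := by
      rw [Real.sqrt_lt' hd0]
      exact hkey
    linarith only [h2']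
  set A0 := max (Real.sqrt (2*L)) (β + Real.sqrt (L - β^2)) with hA0def
  have hA0aM : A0 < β + d := max_lt h1 h2
  set a := (A0 + (β + d))/2 with hadef
  have haA0 : A0 < a := by rw [hadef]; linarith only [hA0aM]
  have haaM : a < β + d := by rw [hadef]; linarith only [hA0aM]
  have hA0nn : 0 ≤ A0 := le_trans (Real.sqrt_nonneg _) (le_max_left _ _)
  have ha0 : 0 < a := by linarith only [lt_of_le_of_lt hA0nn haA0]
  have ha_sq : 2*L < a^2 := (Real.sqrt_lt' ha0).1 (lt_of_le_of_lt (le_max_left _ _) haA0)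
  have hbA0 : β + Real.sqrt (L - β^2) ≤ A0 := le_max_right _ _
  have haβ : β < a := by linarith only [Real.sqrt_nonneg (L - β^2), lt_of_le_of_lt hbA0 haA0]
  have ha_ab : L - β^2 < (a-β)^2 := by
    have h3 : Real.sqrt (L - β^2) < a - β := by
      linarith only [lt_of_le_of_lt hbA0 haA0]
    refine (Real.sqrt_lt' ?_).1 h3
    linarith only [haβ]
  have hdβ : d*β = L/2 := by linarith only [hd, (by ring : d*(2*β) = 2*(d*β))]
  have ha3 : a*β < L/2 + β^2 := by
    have h4 : a * β < (β + d) * β := mul_lt_mul_of_pos_right haaM hβ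
    nlinarith only [h4, hdβ]
  -- liminf constant
  set c := Filter.liminf (fun N : ℕ => t N / Real.sqrt N) atTop / 2 with hcdef
  have hc0 : 0 < c := half_pos hliminf
  have hcob : IsBoundedUnder (· ≥ ·) atTop (fun N : ℕ => t N / Real.sqrt N) := by
    refine ⟨0, ?_⟩
    rw [Filter.eventually_map]
    filter_upwards [ht.eventually_ge_atTop 0] with N hN
    exact div_nonneg hN (Real.sqrt_nonneg _)
  have hevc : ∀ᶠ N : ℕ in atTop, c < t N / Real.sqrt N := by
    refine eventually_lt_of_lt_liminf ?_ hcob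
    rw [hcdef]
    linarith only [hliminf]
  -- derived constants
  set c₂ := (L - β^2)/2 with hc2def
  have hc20 : 0 < c₂ := by rw [hc2def]; linarith only [hβ2, hL]
  set K1 := a^2/2 - L with hK1def
  have hK10 : 0 < K1 := by rw [hK1def]; linarith only [ha_sq]
  set K2 := (a-β)^2/2 - c₂ with hK2def
  have hK20 : 0 < K2 := by rw [hK2def, hc2def]; linarith only [ha_ab]
  set K3 := L + β^2/2 - a*β with hK3def
  have hK3c : c₂ < K3 := by rw [hK3def, hc2def]; linarith only [ha3]
  have hK30 : 0 < K3 := lt_trans hc20 hK3c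
  set η' := ε^2*c^2/48 with hη'def
  have hη'0 : 0 < η' := by rw [hη'def]; positivity
  set η := min K1 (η'/2) with hηdef
  have hη0 : 0 < η := lt_min hK10 (by positivity)
  -- eventual facts
  have hF1 : ∀ᶠ N : ℕ in atTop, 1 ≤ N := Filter.eventually_ge_atTop 1
  have haβ2 : (0:ℝ) < (a-β)^2/2 := by
    have h5 : (0:ℝ) < a - β := by linarith only [haβ]
    positivity
  have htail : ∀ (k : ℝ), 0 < k → Tendsto (fun N : ℕ => Real.exp (-(k*(N:ℝ)))) atTop (nhds 0) := by
    intro k hk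
    have h5 : Tendsto (fun N : ℕ => k*(N:ℝ)) atTop atTop :=
      tendsto_natCast_atTop_atTop.const_mul_atTop hk
    exact Real.tendsto_exp_neg_atTop_nhds_zero.comp h5
  have hF3 : ∀ᶠ N : ℕ in atTop, 4 * Real.exp (-(K2*(N:ℝ))) ≤ ε*c := by
    have h6 : Tendsto (fun N : ℕ => 4 * Real.exp (-(K2*(N:ℝ)))) atTop (nhds (4*0)) :=
      (htail K2 hK20).const_mul 4
    rw [mul_zero] at h6
    exact h6.eventually_le_const (by positivity)
  have hF4 : ∀ᶠ N : ℕ in atTop, 4 * Real.exp (-(((a-β)^2/2)*(N:ℝ))) ≤ 1 := by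
    have h6 : Tendsto (fun N : ℕ => 4 * Real.exp (-(((a-β)^2/2)*(N:ℝ)))) atTop (nhds (4*0)) :=
      (htail _ haβ2).const_mul 4
    rw [mul_zero] at h6
    exact h6.eventually_le_const (by norm_num)
  have hF5 : ∀ᶠ N : ℕ in atTop, ε^2*c^2*(N:ℝ) ≤ Real.exp ((2*c₂)*(N:ℝ)) :=
    rem_ev_linear_le_exp _ (by linarith only [hc20])
  have hF6 : ∀ᶠ N : ℕ in atTop, (4*η'/(ε*c))*(N:ℝ) ≤ Real.exp ((K3-c₂)*(N:ℝ)) :=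
    rem_ev_linear_le_exp _ (by linarith only [hK3c])
  have hF7 : ∀ᶠ N : ℕ in atTop, (4*η')*(N:ℝ) ≤ Real.exp (K3*(N:ℝ)) :=
    rem_ev_linear_le_exp _ hK30
  -- main per-N bound
  have hmain : ∀ᶠ N : ℕ in atTop,
      0 < (ℙ {ω | ε < |Real.exp ((N : ℝ) / 2 * (L - β ^ 2)) / t N *
            Real.log (Z N ω / EZ N)|}).toReal ∧
      (ℙ {ω | ε < |Real.exp ((N : ℝ) / 2 * (L - β ^ 2)) / t N *
            Real.log (Z N ω / EZ N)|}).toReal ≤ 3 * Real.exp (-(η*(N:ℝ))) := by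
    filter_upwards [hF1, hevc, hF3, hF4, hF5, hF6, hF7] with N hN1 hcN hF3N hF4N hF5N hF6N hF7N
    have hNR1 : (1:ℝ) ≤ (N:ℝ) := by exact_mod_cast hN1
    have hNR0 : (0:ℝ) ≤ (N:ℝ) := by linarith only [hNR1]
    have hsqN0 : (0:ℝ) < Real.sqrt N := Real.sqrt_pos.2 (by linarith only [hNR1])
    have hsqN : Real.sqrt N * Real.sqrt N = (N:ℝ) := Real.mul_self_sqrt hNR0
    have hsqN1 : (1:ℝ) ≤ Real.sqrt N := by
      rw [show (1:ℝ) = Real.sqrt 1 by simp]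
      exact Real.sqrt_le_sqrt hNR1
    have ht0 : 0 < t N := by
      rcases div_pos_iff.1 (lt_trans hc0 hcN) with ⟨h1, _⟩ | ⟨_, h2⟩
      · exact h1
      · linarith only [h2, hsqN0]
    have htc : c * Real.sqrt N ≤ t N := by
      calc c * Real.sqrt N ≤ (t N/Real.sqrt N)*Real.sqrt N :=
            mul_le_mul_of_nonneg_right hcN.le hsqN0.le
      _ = t N := by field_simp
    set s := β * Real.sqrt N with hsdef
    have hs0 : 0 < s := mul_pos hβ hsqN0
    have hs2 : s^2 = β^2*(N:ℝ) := by rw [hsdef, mul_pow, Real.sq_sqrt hNR0]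
    set E2 := Real.exp ((N:ℝ)/2*(L - β^2)) with hE2def
    have hE2pos : 0 < E2 := Real.exp_pos _
    have hE2c : E2 = Real.exp (c₂*(N:ℝ)) := by rw [hE2def, hc2def]; congr 1; ring
    set δ := ε * t N / E2 with hδdef
    have hδ0 : 0 < δ := div_pos (mul_pos hε ht0) hE2pos
    set r := min δ 1 / 2 with hrdef
    have hr0 : 0 < r := by
      rw [hrdef]; have h1 := lt_min hδ0 one_pos; linarith only [h1]
    have hrδ : 2*r ≤ δ := by
      rw [hrdef]; have h1 := min_le_left δ 1; linarith only [h1]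
    -- a.e. measurable versions
    have hae : ∀ σ : Fin N → Bool, AEMeasurable (X N σ) ℙ := by
      intro σ
      by_contra hcon
      have h0 := Measure.map_of_not_aemeasurable hcon
      rw [hlaw N σ] at h0
      exact (IsProbabilityMeasure.ne_zero (gaussianReal 0 1)) h0
    set X' : (Fin N → Bool) → Ω → ℝ := fun σ => (hae σ).mk (X N σ) with hX'def
    have hX'm : ∀ σ, Measurable (X' σ) := fun σ => (hae σ).measurable_mk
    have hX'ae : ∀ σ, X N σ =ᵐ[ℙ] X' σ := fun σ => (hae σ).ae_eq_mk
    have hlaw' : ∀ σ, Measure.map (X' σ) ℙ = gaussianReal 0 1 := fun σ => by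
      rw [← Measure.map_congr (hX'ae σ)]; exact hlaw N σ
    set b := Real.exp (a*β*(N:ℝ)) with hbdef
    have hb0 : 0 < b := Real.exp_pos _
    set fm : ℝ → ℝ := fun x => min (Real.exp (s*x)) b with hfmdef
    have hfmm : Measurable fm :=
      (Real.measurable_exp.comp (measurable_id.const_mul s)).min measurable_const
    have hfm0 : ∀ x, 0 < fm x := fun x => lt_min (Real.exp_pos _) hb0
    have hfmb : ∀ x, fm x ≤ b := fun x => min_le_right _ _
    set W : (Fin N → Bool) → Ω → ℝ := fun σ => fm ∘ X' σ with hWdef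
    have hWm : ∀ σ, Measurable (W σ) := fun σ => hfmm.comp (hX'm σ)
    have hWindep : iIndepFun W ℙ :=
      (rem_iIndepFun_ae_eq (hindep N) hX'ae).comp (fun _ => fm) (fun _ => hfmm)
    set m1 := ∫ x, fm x ∂(gaussianReal 0 1) with hm1def
    set m2 := ∫ x, (fm x)^2 ∂(gaussianReal 0 1) with hm2def
    have hfmInt : Integrable fm (gaussianReal 0 1) :=
      rem_integrable_of_bdd hfmm.aestronglyMeasurable (C := b)
        (fun x => abs_le.2 ⟨by linarith only [hfm0 x, hb0], hfmb x⟩)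
    have hfm2Int : Integrable (fun x => (fm x)^2) (gaussianReal 0 1) :=
      rem_integrable_of_bdd (hfmm.pow_const 2).aestronglyMeasurable (C := b^2)
        (fun x => by
          rw [abs_of_nonneg (sq_nonneg _)]
          nlinarith only [hfm0 x, hfmb x])
    have hEW : ∀ σ, ∫ ω, W σ ω ∂ℙ = m1 := by
      intro σ
      calc ∫ ω, W σ ω ∂ℙ = ∫ x, fm x ∂(Measure.map (X' σ) ℙ) :=
            (integral_map (hX'm σ).aemeasurable hfmm.aestronglyMeasurable).symm
      _ = m1 := by rw [hlaw' σ, hm1def]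
    have hEW2 : ∀ σ, ∫ ω, (W σ ω)^2 ∂ℙ = m2 := by
      intro σ
      calc ∫ ω, (W σ ω)^2 ∂ℙ = ∫ x, (fm x)^2 ∂(Measure.map (X' σ) ℙ) :=
            (integral_map (hX'm σ).aemeasurable
              (hfmm.pow_const 2).aestronglyMeasurable).symm
      _ = m2 := by rw [hlaw' σ, hm2def]
    have hm2v : m2 ≤ Real.exp (2*β^2*(N:ℝ)) := by
      have hpt : ∀ x, (fm x)^2 ≤ Real.exp ((2*s)*x) := by
        intro x
        have h1 : Real.exp ((2*s)*x) = Real.exp (s*x) * Real.exp (s*x) := by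
          rw [← Real.exp_add]; congr 1; ring
        have h2 : fm x ≤ Real.exp (s*x) := min_le_left _ _
        calc (fm x)^2 = fm x * fm x := sq (fm x)
        _ ≤ Real.exp (s*x) * Real.exp (s*x) :=
            mul_le_mul h2 h2 (hfm0 x).le (Real.exp_nonneg _)
        _ = Real.exp ((2*s)*x) := h1.symm
      calc m2 ≤ ∫ x, Real.exp ((2*s)*x) ∂(gaussianReal 0 1) :=
            integral_mono hfm2Int (rem_exp_mul_gauss_integrable _) hpt
      _ = Real.exp ((2*s)^2/2) := rem_exp_mul_gauss_integral _
      _ = Real.exp (2*β^2*(N:ℝ)) := by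
          congr 1
          rw [show (2*s)^2/2 = 2*(s^2) from by ring, hs2]; ring
    -- EZ value
    set n : ℝ := (Fintype.card (Fin N → Bool) : ℝ) with hndef
    have hcard : n = 2^(N:ℕ) := by
      rw [hndef]
      norm_num [Fintype.card_fun]
    have hn0 : 0 < n := by rw [hcard]; positivity
    have hnL : n = Real.exp ((N:ℝ)*L) := by
      rw [hcard, Real.exp_nat_mul, Real.exp_log (by norm_num : (0:ℝ) < 2)]
    have hexpInt : ∀ σ, Integrable (fun ω => Real.exp (s * X N σ ω)) ℙ := by
      intro σ
      have h1 := rem_exp_mul_gauss_integrable s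
      rw [← hlaw N σ] at h1
      exact (integrable_map_measure
        (Real.measurable_exp.comp (measurable_id.const_mul s)).aestronglyMeasurable
        (hae σ)).1 h1
    have hexpVal : ∀ σ, ∫ ω, Real.exp (s * X N σ ω) ∂ℙ = Real.exp (β^2*(N:ℝ)/2) := by
      intro σ
      calc ∫ ω, Real.exp (s * X N σ ω) ∂ℙ
          = ∫ x, Real.exp (s*x) ∂(Measure.map (X N σ) ℙ) :=
            (integral_map (hae σ)
              (Real.measurable_exp.comp (measurable_id.const_mul s)).aestronglyMeasurable).symm
      _ = Real.exp (s^2/2) := by rw [hlaw N σ]; exact rem_exp_mul_gauss_integral s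
      _ = Real.exp (β^2*(N:ℝ)/2) := by congr 1; rw [hs2]
    have hEZval : EZ N = n * Real.exp (β^2*(N:ℝ)/2) := by
      rw [hEZ]
      calc ∫ ω, Z N ω ∂ℙ = ∫ ω, ∑ σ : Fin N → Bool, Real.exp (s * X N σ ω) ∂ℙ := by
            congr 1; funext ω; rw [hZ N ω, hsdef]
      _ = ∑ σ : Fin N → Bool, ∫ ω, Real.exp (s * X N σ ω) ∂ℙ :=
            integral_finset_sum _ (fun σ _ => hexpInt σ)
      _ = ∑ _σ : Fin N → Bool, Real.exp (β^2*(N:ℝ)/2) :=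
            Finset.sum_congr rfl fun σ _ => hexpVal σ
      _ = n * Real.exp (β^2*(N:ℝ)/2) := by
            rw [Finset.sum_const, Finset.card_univ, nsmul_eq_mul, hndef]
    have hEZpos : 0 < EZ N := by rw [hEZval]; positivity
    have hm1le : m1 ≤ Real.exp (β^2*(N:ℝ)/2) := by
      calc m1 ≤ ∫ x, Real.exp (s*x) ∂(gaussianReal 0 1) :=
            integral_mono hfmInt (rem_exp_mul_gauss_integrable s) (fun x => min_le_left _ _)
      _ = Real.exp (s^2/2) := rem_exp_mul_gauss_integral s
      _ = Real.exp (β^2*(N:ℝ)/2) := by congr 1; rw [hs2]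
    have hnm1EZ : n * m1 ≤ EZ N := by
      rw [hEZval]
      exact mul_le_mul_of_nonneg_left hm1le hn0.le
    have hsaN : s * (a*Real.sqrt N) = a*β*(N:ℝ) := by
      rw [hsdef]
      calc β*Real.sqrt N*(a*Real.sqrt N) = a*β*(Real.sqrt N*Real.sqrt N) := by ring
      _ = a*β*(N:ℝ) := by rw [hsqN]
    -- truncation error
    have htrunc : EZ N - n*m1 ≤ (r/2) * EZ N := by
      set q := (a-β)*Real.sqrt N with hqdef
      have hq0 : 0 ≤ q := mul_nonneg (by linarith only [haβ]) hsqN0.le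
      have hptd : ∀ x, Real.exp (s*x) - fm x
          ≤ Real.exp (-(q*(a*Real.sqrt N))) * Real.exp ((s+q)*x) := by
        intro x
        rcases le_or_gt (Real.exp (s*x)) b with hca | hca
        · have h1 : fm x = Real.exp (s*x) := min_eq_left hca
          rw [h1, sub_self]
          positivity
        · have hxa : a * Real.sqrt N < x := by
            have h2 : Real.exp (s*(a*Real.sqrt N)) < Real.exp (s*x) := by
              rw [hsaN, ← hbdef]; exact hca
            have h3 := Real.exp_lt_exp.1 h2
            exact (mul_lt_mul_iff_right₀ hs0).1 h3
          have h4 : Real.exp (s*x) - fm x ≤ Real.exp (s*x) := by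
            linarith only [hfm0 x]
          refine h4.trans ?_
          rw [← Real.exp_add]
          apply Real.exp_le_exp.2
          have h5 : 0 ≤ q*(x - a*Real.sqrt N) := mul_nonneg hq0 (by linarith only [hxa])
          nlinarith only [h5]
      have hint1 := rem_exp_mul_gauss_integrable s
      have hint2 := (rem_exp_mul_gauss_integrable (s+q)).const_mul
        (Real.exp (-(q*(a*Real.sqrt N))))
      have hsubI : ∫ x, (Real.exp (s*x) - fm x) ∂(gaussianReal 0 1)
          = Real.exp (s^2/2) - m1 := by
        rw [integral_sub hint1 hfmInt, rem_exp_mul_gauss_integral s, hm1def]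
      have hle : Real.exp (s^2/2) - m1
          ≤ Real.exp (-(q*(a*Real.sqrt N))) * Real.exp ((s+q)^2/2) := by
        rw [← hsubI]
        calc ∫ x, (Real.exp (s*x) - fm x) ∂(gaussianReal 0 1)
            ≤ ∫ x, Real.exp (-(q*(a*Real.sqrt N))) * Real.exp ((s+q)*x) ∂(gaussianReal 0 1) :=
              integral_mono (hint1.sub hfmInt) hint2 hptd
        _ = Real.exp (-(q*(a*Real.sqrt N))) * Real.exp ((s+q)^2/2) := by
            rw [integral_const_mul, rem_exp_mul_gauss_integral]
      have hval : Real.exp (-(q*(a*Real.sqrt N))) * Real.exp ((s+q)^2/2)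
          = Real.exp (β^2*(N:ℝ)/2) * Real.exp (-(((a-β)^2/2)*(N:ℝ))) := by
        rw [← Real.exp_add, ← Real.exp_add]
        congr 1
        have h1 : s + q = a * Real.sqrt N := by rw [hsdef, hqdef]; ring
        rw [h1, hqdef]
        calc -((a-β)*Real.sqrt N*(a*Real.sqrt N)) + (a*Real.sqrt N)^2/2
            = (-(a-β)*a + a^2/2)*(Real.sqrt N*Real.sqrt N) := by ring
        _ = (-(a-β)*a + a^2/2)*(N:ℝ) := by rw [hsqN]
        _ = β^2*(N:ℝ)/2 + -(((a-β)^2/2)*(N:ℝ)) := by ring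
      have h5 : EZ N - n*m1 ≤ EZ N * Real.exp (-(((a-β)^2/2)*(N:ℝ))) := by
        have h6 : Real.exp (s^2/2) = Real.exp (β^2*(N:ℝ)/2) := by congr 1; rw [hs2]
        calc EZ N - n*m1 = n * (Real.exp (s^2/2) - m1) := by rw [hEZval, h6]; ring
        _ ≤ n * (Real.exp (-(q*(a*Real.sqrt N))) * Real.exp ((s+q)^2/2)) :=
            mul_le_mul_of_nonneg_left hle hn0.le
        _ = EZ N * Real.exp (-(((a-β)^2/2)*(N:ℝ))) := by rw [hval, hEZval]; ring
      have h7 : Real.exp (-(((a-β)^2/2)*(N:ℝ))) ≤ r/2 := by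
        have h9 : 4*Real.exp (-(((a-β)^2/2)*(N:ℝ))) ≤ ε*c*Real.exp (-(c₂*(N:ℝ))) := by
          have h10 : Real.exp (-(((a-β)^2/2)*(N:ℝ)))
              = Real.exp (-(K2*(N:ℝ))) * Real.exp (-(c₂*(N:ℝ))) := by
            rw [← Real.exp_add]; congr 1; rw [hK2def]; ring
          rw [h10]
          calc 4*(Real.exp (-(K2*(N:ℝ)))*Real.exp (-(c₂*(N:ℝ))))
              = (4*Real.exp (-(K2*(N:ℝ))))*Real.exp (-(c₂*(N:ℝ))) := by ring
          _ ≤ (ε*c)*Real.exp (-(c₂*(N:ℝ))) :=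
              mul_le_mul_of_nonneg_right hF3N (Real.exp_nonneg _)
        have h11 : ε*c*Real.exp (-(c₂*(N:ℝ))) ≤ δ := by
          rw [hδdef, hE2c, Real.exp_neg, div_eq_mul_inv]
          refine mul_le_mul_of_nonneg_right ?_ (inv_nonneg.2 (Real.exp_nonneg _))
          have h12 : c ≤ t N := by nlinarith only [htc, hsqN1, hc0.le]
          nlinarith only [h12, hε.le, hc0.le]
        have h8 : 4*Real.exp (-(((a-β)^2/2)*(N:ℝ))) ≤ min δ 1 :=
          le_min (by linarith only [h9, h11]) hF4N
        rw [hrdef]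
        linarith only [h8]
      calc EZ N - n*m1 ≤ EZ N * Real.exp (-(((a-β)^2/2)*(N:ℝ))) := h5
      _ ≤ EZ N * (r/2) := mul_le_mul_of_nonneg_left h7 hEZpos.le
      _ = (r/2)*EZ N := by ring
    set u := r/2 * EZ N with hudef
    have hu0 : 0 < u := by rw [hudef]; exact mul_pos (by linarith only [hr0]) hEZpos
    -- Chernoff bound for the truncated sum
    have hB := rem_sum_dev_bound (μ := ℙ) (W := W) hWm hWindep hb0
      (fun σ ω => (hfm0 _).le) (fun σ ω => hfmb _) hEW hEW2 hm2v
      (Real.exp_pos (2*β^2*(N:ℝ))) hu0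
    rw [← hndef] at hB
    -- union (truncation-active) event
    have hAbound : (ℙ (⋃ σ : Fin N → Bool, {ω | b < Real.exp (s * X' σ ω)})).toReal
        ≤ n * Real.exp (-(a^2*(N:ℝ)/2)) := by
      have htail1 : ∀ σ : Fin N → Bool, ℙ {ω | b < Real.exp (s * X' σ ω)}
          ≤ ENNReal.ofReal (Real.exp (-(a^2*(N:ℝ)/2))) := by
        intro σ
        have hsub2 : {ω | b < Real.exp (s * X' σ ω)} ⊆ X' σ ⁻¹' (Set.Ici (a*Real.sqrt N)) := by
          intro ω hω
          simp only [Set.mem_setOf_eq] at hω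
          simp only [Set.mem_preimage, Set.mem_Ici]
          have h2 : Real.exp (s*(a*Real.sqrt N)) < Real.exp (s*(X' σ ω)) := by
            rw [hsaN, ← hbdef]; exact hω
          have h3 := Real.exp_lt_exp.1 h2
          exact ((mul_lt_mul_iff_right₀ hs0).1 h3).le
        calc ℙ {ω | b < Real.exp (s * X' σ ω)} ≤ ℙ (X' σ ⁻¹' (Set.Ici (a*Real.sqrt N))) :=
              measure_mono hsub2
        _ = Measure.map (X' σ) ℙ (Set.Ici (a*Real.sqrt N)) :=
            (Measure.map_apply_of_aemeasurable (hX'm σ).aemeasurable measurableSet_Ici).symm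
        _ ≤ ENNReal.ofReal (Real.exp (-(a^2*(N:ℝ)/2))) := by
            rw [hlaw' σ]
            have h2 : ((gaussianReal 0 1) (Set.Ici (a*Real.sqrt N))).toReal
                ≤ Real.exp (-((a*Real.sqrt N)^2/2)) :=
              rem_gauss_tail (c := a*Real.sqrt N) (by positivity)
            have h3 : (a*Real.sqrt N)^2/2 = a^2*(N:ℝ)/2 := by
              rw [mul_pow, Real.sq_sqrt hNR0]
            rw [h3] at h2
            calc gaussianReal 0 1 (Set.Ici (a*Real.sqrt N))
                = ENNReal.ofReal ((gaussianReal 0 1 (Set.Ici (a*Real.sqrt N))).toReal) :=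
                  (ENNReal.ofReal_toReal (measure_ne_top _ _)).symm
            _ ≤ ENNReal.ofReal (Real.exp (-(a^2*(N:ℝ)/2))) := ENNReal.ofReal_le_ofReal h2
      calc (ℙ (⋃ σ : Fin N → Bool, {ω | b < Real.exp (s * X' σ ω)})).toReal
          ≤ ((Fintype.card (Fin N → Bool)) •
              ENNReal.ofReal (Real.exp (-(a^2*(N:ℝ)/2)))).toReal := by
            refine ENNReal.toReal_mono ?_ ?_
            · rw [nsmul_eq_mul]
              exact ENNReal.mul_ne_top (ENNReal.natCast_ne_top _) ENNReal.ofReal_ne_top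
            · refine (measure_iUnion_le _).trans ?_
              rw [tsum_fintype]
              refine (Finset.sum_le_sum (fun σ _ => htail1 σ)).trans ?_
              rw [Finset.sum_const, Finset.card_univ]
      _ = n * Real.exp (-(a^2*(N:ℝ)/2)) := by
          rw [nsmul_eq_mul, ENNReal.toReal_mul, ENNReal.toReal_natCast,
            ENNReal.toReal_ofReal (Real.exp_nonneg _), hndef]
    -- inclusion of the target event
    have hincl : {ω | ε < |E2 / t N * Real.log (Z N ω / EZ N)|}
        ⊆ (⋃ σ : Fin N → Bool, {ω | ¬ (X N σ ω = X' σ ω)})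
          ∪ ((⋃ σ : Fin N → Bool, {ω | b < Real.exp (s * X' σ ω)})
            ∪ {ω | u ≤ |(∑ σ : Fin N → Bool, W σ ω) - n * m1|}) := by
      intro ω hω
      by_cases hc1 : ω ∈ ⋃ σ : Fin N → Bool, {ω | ¬ (X N σ ω = X' σ ω)}
      · exact Or.inl hc1
      by_cases hc2 : ω ∈ ⋃ σ : Fin N → Bool, {ω | b < Real.exp (s * X' σ ω)}
      · exact Or.inr (Or.inl hc2)
      refine Or.inr (Or.inr ?_)
      have hXeq : ∀ σ, X N σ ω = X' σ ω := by
        intro σ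
        by_contra hne
        exact hc1 (Set.mem_iUnion.2 ⟨σ, hne⟩)
      have hWeq : ∀ σ, W σ ω = Real.exp (s * X' σ ω) := by
        intro σ
        have h1 : ¬ (b < Real.exp (s * X' σ ω)) := fun h => hc2 (Set.mem_iUnion.2 ⟨σ, h⟩)
        show fm (X' σ ω) = _
        rw [hfmdef]
        exact min_eq_left (not_lt.1 h1)
      have hZeq : Z N ω = ∑ σ : Fin N → Bool, W σ ω := by
        rw [hZ N ω]
        refine Finset.sum_congr rfl fun σ _ => ?_
        rw [hWeq σ, ← hXeq σ, hsdef]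
      have hZpos : 0 < Z N ω := by
        rw [hZ N ω]
        exact Finset.sum_pos (fun σ _ => Real.exp_pos _) Finset.univ_nonempty
      have hQ : 0 < E2 / t N := div_pos hE2pos ht0
      have hω' : ε < |E2 / t N * Real.log (Z N ω / EZ N)| := hω
      have hlog : δ < |Real.log (Z N ω / EZ N)| := by
        rw [abs_mul, abs_of_pos hQ] at hω'
        have h2 : ε * t N < E2 * |Real.log (Z N ω / EZ N)| := by
          calc ε * t N < (E2/t N * |Real.log (Z N ω / EZ N)|) * t N :=
                mul_lt_mul_of_pos_right hω' ht0
          _ = E2 * |Real.log (Z N ω / EZ N)| := by field_simp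
        rw [hδdef, div_lt_iff₀ hE2pos]
        linarith only [h2]
      have hZEZ : 0 < Z N ω / EZ N := div_pos hZpos hEZpos
      have habs : r * EZ N ≤ |Z N ω - EZ N| := by
        rcases lt_abs.1 hlog with h1 | h1
        · have h2 : Real.exp δ < Z N ω / EZ N := by
            rw [← Real.exp_log hZEZ]
            exact Real.exp_lt_exp.2 h1
          have h3 : 1 + δ ≤ Real.exp δ := by linarith only [Real.add_one_le_exp δ]
          have h4 : 1 + r ≤ Z N ω / EZ N := by linarith only [h2, h3, hrδ, hr0]
          have h5 : (1+r) * EZ N ≤ Z N ω := by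
            calc (1+r)*EZ N ≤ (Z N ω/EZ N)*EZ N :=
                  mul_le_mul_of_nonneg_right h4 hEZpos.le
            _ = Z N ω := by field_simp
          calc r * EZ N ≤ Z N ω - EZ N := by linarith only [h5]
          _ ≤ |Z N ω - EZ N| := le_abs_self _
        · have h2 : Z N ω / EZ N < Real.exp (-δ) := by
            rw [← Real.exp_log hZEZ]
            exact Real.exp_lt_exp.2 (by linarith only [h1])
          have h3 : Real.exp (-δ) ≤ Real.exp (-(min δ 1)) :=
            Real.exp_le_exp.2 (by linarith only [min_le_left δ 1])
          have h4 : Real.exp (-(min δ 1)) ≤ 1 - (min δ 1)/2 :=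
            rem_exp_neg_le (le_min hδ0.le zero_le_one) (min_le_right δ 1)
          have h5 : Z N ω / EZ N ≤ 1 - r := by
            rw [hrdef]
            linarith only [h2, h3, h4]
          have h6 : Z N ω ≤ (1-r)*EZ N := by
            calc Z N ω = (Z N ω/EZ N)*EZ N := by field_simp
            _ ≤ (1-r)*EZ N := mul_le_mul_of_nonneg_right h5 hEZpos.le
          calc r*EZ N ≤ EZ N - Z N ω := by nlinarith only [h6, hEZpos]
          _ ≤ |Z N ω - EZ N| := by rw [abs_sub_comm]; exact le_abs_self _
      have h7 : |Z N ω - EZ N| - |EZ N - n*m1| ≤ |Z N ω - n*m1| := by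
        have h7' := abs_sub_abs_le_abs_sub (Z N ω - EZ N) (-(EZ N - n*m1))
        rw [abs_neg] at h7'
        calc |Z N ω - EZ N| - |EZ N - n*m1|
            ≤ |Z N ω - EZ N - -(EZ N - n*m1)| := h7'
        _ = |Z N ω - n*m1| := by ring_nf
      have h8 : |EZ N - n*m1| ≤ (r/2)*EZ N := by
        rw [abs_of_nonneg (by linarith only [hnm1EZ])]
        exact htrunc
      show u ≤ |(∑ σ : Fin N → Bool, W σ ω) - n * m1|
      rw [← hZeq]
      have h9 : r*EZ N - (r/2)*EZ N = u := by rw [hudef]; ring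
      linarith only [habs, h7, h8, h9]
    -- assemble probability bound
    have hN0null : ℙ (⋃ σ : Fin N → Bool, {ω | ¬ (X N σ ω = X' σ ω)}) = 0 :=
      measure_iUnion_null (fun σ => ae_iff.1 (hX'ae σ))
    have hPbound : (ℙ {ω | ε < |E2 / t N * Real.log (Z N ω / EZ N)|}).toReal
        ≤ n * Real.exp (-(a^2*(N:ℝ)/2))
          + 2*Real.exp (-(min (u^2/(3*n*(Real.exp (2*β^2*(N:ℝ))))) (u/b))/2) := by
      have h1 : ℙ {ω | ε < |E2 / t N * Real.log (Z N ω / EZ N)|}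
          ≤ ℙ (⋃ σ : Fin N → Bool, {ω | b < Real.exp (s * X' σ ω)})
            + ℙ {ω | u ≤ |(∑ σ : Fin N → Bool, W σ ω) - n * m1|} := by
        calc ℙ {ω | ε < |E2 / t N * Real.log (Z N ω / EZ N)|}
            ≤ ℙ ((⋃ σ : Fin N → Bool, {ω | ¬ (X N σ ω = X' σ ω)})
              ∪ ((⋃ σ : Fin N → Bool, {ω | b < Real.exp (s * X' σ ω)})
                ∪ {ω | u ≤ |(∑ σ : Fin N → Bool, W σ ω) - n * m1|})) := measure_mono hincl
        _ ≤ ℙ (⋃ σ : Fin N → Bool, {ω | ¬ (X N σ ω = X' σ ω)})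
            + ℙ ((⋃ σ : Fin N → Bool, {ω | b < Real.exp (s * X' σ ω)})
              ∪ {ω | u ≤ |(∑ σ : Fin N → Bool, W σ ω) - n * m1|}) := measure_union_le _ _
        _ = ℙ ((⋃ σ : Fin N → Bool, {ω | b < Real.exp (s * X' σ ω)})
              ∪ {ω | u ≤ |(∑ σ : Fin N → Bool, W σ ω) - n * m1|}) := by
            rw [hN0null, zero_add]
        _ ≤ _ := measure_union_le _ _
      calc (ℙ {ω | ε < |E2 / t N * Real.log (Z N ω / EZ N)|}).toReal
          ≤ (ℙ (⋃ σ : Fin N → Bool, {ω | b < Real.exp (s * X' σ ω)})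
            + ℙ {ω | u ≤ |(∑ σ : Fin N → Bool, W σ ω) - n * m1|}).toReal :=
            ENNReal.toReal_mono
              (ENNReal.add_ne_top.2 ⟨measure_ne_top _ _, measure_ne_top _ _⟩) h1
      _ = (ℙ (⋃ σ : Fin N → Bool, {ω | b < Real.exp (s * X' σ ω)})).toReal
          + (ℙ {ω | u ≤ |(∑ σ : Fin N → Bool, W σ ω) - n * m1|}).toReal :=
            ENNReal.toReal_add (measure_ne_top _ _) (measure_ne_top _ _)
      _ ≤ _ := add_le_add hAbound hB
    constructor
    · -- positivity
      set σ0 : Fin N → Bool := fun _ => false with hσ0def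
      set K := (Real.log (EZ N) + δ + 1)/s with hKdef
      have hsubT : {ω | K < X N σ0 ω}
          ⊆ {ω | ε < |E2 / t N * Real.log (Z N ω / EZ N)|} := by
        intro ω hω
        simp only [Set.mem_setOf_eq] at hω ⊢
        have h1 : Real.exp (s*K) = EZ N * Real.exp (δ+1) := by
          have h2 : s*K = Real.log (EZ N) + (δ+1) := by
            rw [hKdef]; field_simp; ring
          rw [h2, Real.exp_add, Real.exp_log hEZpos]
        have h3 : Real.exp (s*K) < Real.exp (s * X N σ0 ω) :=
          Real.exp_lt_exp.2 (mul_lt_mul_of_pos_left hω hs0)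
        have h4 : Real.exp (s * X N σ0 ω) ≤ Z N ω := by
          rw [hZ N ω, hsdef]
          exact Finset.single_le_sum
            (f := fun σ => Real.exp (β * Real.sqrt N * X N σ ω))
            (fun σ _ => (Real.exp_pos _).le) (Finset.mem_univ σ0)
        have h5 : EZ N * Real.exp (δ+1) < Z N ω := lt_of_lt_of_le (h1 ▸ h3) h4
        have hZpos2 : 0 < Z N ω := lt_trans (by positivity) h5
        have h6 : δ + 1 < Real.log (Z N ω / EZ N) := by
          rw [Real.lt_log_iff_exp_lt (div_pos hZpos2 hEZpos), lt_div_iff₀ hEZpos]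
          calc Real.exp (δ+1) * EZ N = EZ N * Real.exp (δ+1) := by ring
          _ < Z N ω := h5
        have h7 : ε = E2/t N * δ := by
          rw [hδdef]; field_simp
        have h8 : E2/t N * δ < E2/t N * Real.log (Z N ω / EZ N) :=
          mul_lt_mul_of_pos_left (by linarith only [h6]) (div_pos hE2pos ht0)
        calc ε = E2/t N * δ := h7
        _ < E2/t N * Real.log (Z N ω/EZ N) := h8
        _ ≤ |E2/t N * Real.log (Z N ω/EZ N)| := le_abs_self _
      have hmapK : ℙ {ω | K < X N σ0 ω} = gaussianReal 0 1 (Set.Ioi K) := by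
        rw [← hlaw N σ0,
          Measure.map_apply_of_aemeasurable (hae σ0) measurableSet_Ioi]
        rfl
      have hne : ℙ {ω | ε < |E2 / t N * Real.log (Z N ω / EZ N)|} ≠ 0 := by
        intro h0
        have h1 : ℙ {ω | K < X N σ0 ω} = 0 :=
          le_antisymm (le_trans (measure_mono hsubT) h0.le) (by simp)
        rw [hmapK] at h1
        exact rem_gauss_Ioi_ne_zero K h1
      exact ENNReal.toReal_pos hne (measure_ne_top _ _)
    · -- numeric bound
      refine hPbound.trans ?_
      have hnum1 : n * Real.exp (-(a^2*(N:ℝ)/2)) ≤ Real.exp (-(η*(N:ℝ))) := by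
        rw [hnL, ← Real.exp_add]
        apply Real.exp_le_exp.2
        have h2 : η*(N:ℝ) ≤ K1*(N:ℝ) :=
          mul_le_mul_of_nonneg_right (min_le_left _ _) hNR0
        rw [hK1def] at h2
        linarith only [h2]
      have hQ1 : η'*(N:ℝ) ≤ u^2/(3*n*(Real.exp (2*β^2*(N:ℝ)))) := by
        rw [le_div_iff₀ (by positivity)]
        have hu2 : u^2 = (min δ 1)^2 * (n^2 * (Real.exp (β^2*(N:ℝ)/2))^2)/16 := by
          rw [hudef, hrdef, hEZval]; ring
        have hE1s : (Real.exp (β^2*(N:ℝ)/2))^2 = Real.exp (β^2*(N:ℝ)) := by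
          rw [sq, ← Real.exp_add]; congr 1; ring
        have hnsplit : n * Real.exp (β^2*(N:ℝ))
            = Real.exp ((2*c₂)*(N:ℝ)) * Real.exp (2*β^2*(N:ℝ)) := by
          rw [hnL, ← Real.exp_add, ← Real.exp_add]; congr 1; rw [hc2def]; ring
        have hcase : ε^2*c^2*(N:ℝ) ≤ (min δ 1)^2 * Real.exp ((2*c₂)*(N:ℝ)) := by
          rcases min_cases δ 1 with ⟨hmin, hcmp⟩ | ⟨hmin, hcmp⟩
          · rw [hmin]
            have hesq : Real.exp (c₂*(N:ℝ))^2 = Real.exp ((2*c₂)*(N:ℝ)) := by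
              rw [sq, ← Real.exp_add]; congr 1; ring
            have hδsq : δ^2 * Real.exp ((2*c₂)*(N:ℝ)) = ε^2*(t N)^2 := by
              rw [hδdef, hE2c, ← hesq]
              field_simp
            have h3 : c^2*(N:ℝ) ≤ (t N)^2 := by
              have h := mul_self_le_mul_self (mul_nonneg hc0.le hsqN0.le) htc
              nlinarith only [h, hsqN]
            have h4 : ε^2*(c^2*(N:ℝ)) ≤ ε^2*(t N)^2 :=
              mul_le_mul_of_nonneg_left h3 (sq_nonneg ε)
            rw [hδsq]
            linarith only [h4]
          · rw [hmin, one_pow, one_mul]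
            exact hF5N
        have h5 := mul_le_mul_of_nonneg_right hcase (Real.exp_nonneg (2*β^2*(N:ℝ)))
        have h7 := mul_le_mul_of_nonneg_left h5 hn0.le
        rw [hu2, hE1s]
        have h6 : n^2 * Real.exp (β^2*(N:ℝ))
            = n * (Real.exp ((2*c₂)*(N:ℝ)) * Real.exp (2*β^2*(N:ℝ))) := by
          rw [← hnsplit]; ring
        rw [h6, hη'def]
        linarith only [h7]
      have hQ2 : η'*(N:ℝ) ≤ u/b := by
        have hK3exp : Real.exp ((N:ℝ)*L) * Real.exp (β^2*(N:ℝ)/2) / Real.exp (a*β*(N:ℝ))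
            = Real.exp (K3*(N:ℝ)) := by
          rw [← Real.exp_add, ← Real.exp_sub]; congr 1; rw [hK3def]; ring
        have hub : u/b = (min δ 1)/4 * Real.exp (K3*(N:ℝ)) := by
          rw [hudef, hrdef, hEZval, hnL, hbdef, ← hK3exp]
          ring
        rw [hub]
        rcases min_cases δ 1 with ⟨hmin, hcmp⟩ | ⟨hmin, hcmp⟩
        · rw [hmin]
          have h3 : c ≤ t N := by nlinarith only [htc, hsqN1, hc0.le]
          have h1 : ε*c/4 * Real.exp ((K3-c₂)*(N:ℝ)) ≤ δ/4 * Real.exp (K3*(N:ℝ)) := by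
            rw [hδdef, hE2c]
            have h2 : Real.exp ((K3-c₂)*(N:ℝ))
                = Real.exp (K3*(N:ℝ)) / Real.exp (c₂*(N:ℝ)) := by
              rw [← Real.exp_sub]; congr 1; ring
            rw [h2]
            have h5 : (0:ℝ) ≤ Real.exp (K3*(N:ℝ))/Real.exp (c₂*(N:ℝ)) := by positivity
            have h6 : ε*c ≤ ε*(t N) := mul_le_mul_of_nonneg_left h3 hε.le
            calc ε*c/4 * (Real.exp (K3*(N:ℝ))/Real.exp (c₂*(N:ℝ)))
                = ε*c * (Real.exp (K3*(N:ℝ))/Real.exp (c₂*(N:ℝ)))/4 := by ring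
            _ ≤ ε*(t N) * (Real.exp (K3*(N:ℝ))/Real.exp (c₂*(N:ℝ)))/4 := by
                nlinarith only [h5, h6]
            _ = ε*(t N)/Real.exp (c₂*(N:ℝ))/4 * Real.exp (K3*(N:ℝ)) := by ring
          have h7 : η'*(N:ℝ) ≤ ε*c/4 * Real.exp ((K3-c₂)*(N:ℝ)) := by
            have h9 := mul_le_mul_of_nonneg_left hF6N
              (show (0:ℝ) ≤ ε*c/4 by positivity)
            have h10 : ε*c/4 * ((4*η'/(ε*c))*(N:ℝ)) = η'*(N:ℝ) := by
              field_simp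
            rw [h10] at h9
            exact h9
          exact h7.trans h1
        · rw [hmin]
          linarith only [hF7N]
      have hnum2 : 2*Real.exp (-(min (u^2/(3*n*(Real.exp (2*β^2*(N:ℝ))))) (u/b))/2)
          ≤ 2*Real.exp (-(η*(N:ℝ))) := by
        have h1 : η*(N:ℝ) ≤ (min (u^2/(3*n*(Real.exp (2*β^2*(N:ℝ))))) (u/b))/2 := by
          have h3 : η*(N:ℝ) ≤ (η'/2)*(N:ℝ) :=
            mul_le_mul_of_nonneg_right (min_le_right _ _) hNR0
          have h4 := le_min hQ1 hQ2
          linarith only [h3, h4]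
        have h5 := Real.exp_le_exp.2 (neg_le_neg h1)
        rw [neg_div]
        linarith only [h5]
      calc n * Real.exp (-(a^2*(N:ℝ)/2))
            + 2*Real.exp (-(min (u^2/(3*n*(Real.exp (2*β^2*(N:ℝ))))) (u/b))/2)
          ≤ Real.exp (-(η*(N:ℝ))) + 2*Real.exp (-(η*(N:ℝ))) := add_le_add hnum1 hnum2
      _ = 3*Real.exp (-(η*(N:ℝ))) := by ring
  -- conclusion
  rw [Filter.tendsto_atBot]
  intro bb
  set B := |bb| with hBdef
  have hB0 : 0 ≤ B := abs_nonneg bb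
  have hρ0 : 0 < η/(2*(B+1)) := by positivity
  have hsmall := hγo.def hρ0
  filter_upwards [hmain, hγ.eventually_ge_atTop 1, hsmall,
    (tendsto_natCast_atTop_atTop.const_mul_atTop (half_pos hη0)).eventually_ge_atTop
      (Real.log 3)] with N hPP hγ1 hγρ hlog3
  obtain ⟨hP0, hPle⟩ := hPP
  rw [Real.norm_eq_abs, Real.norm_eq_abs] at hγρ
  have hγpos : (0:ℝ) < γ N := by linarith only [hγ1]
  have hNnn : (0:ℝ) ≤ (N:ℝ) := Nat.cast_nonneg N
  have hγle : γ N ≤ η/(2*(B+1)) * (N:ℝ) := by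
    calc γ N ≤ |γ N| := le_abs_self _
    _ ≤ η/(2*(B+1)) * |(N:ℝ)| := hγρ
    _ = η/(2*(B+1)) * (N:ℝ) := by rw [abs_of_nonneg hNnn]
  set P := (ℙ {ω | ε < |Real.exp ((N : ℝ) / 2 * (L - β ^ 2)) / t N *
        Real.log (Z N ω / EZ N)|}).toReal with hPdef
  have hlogP : Real.log P ≤ Real.log 3 - η*(N:ℝ) := by
    calc Real.log P ≤ Real.log (3 * Real.exp (-(η*(N:ℝ)))) := Real.log_le_log hP0 hPle
    _ = Real.log 3 + (-(η*(N:ℝ))) := by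
        rw [Real.log_mul (by norm_num) (Real.exp_ne_zero _), Real.log_exp]
    _ = Real.log 3 - η*(N:ℝ) := by ring
  have hkey : Real.log P ≤ bb * γ N := by
    have h6 : Real.log 3 - η*(N:ℝ) ≤ -(η/2)*(N:ℝ) := by linarith only [hlog3]
    have h8 : -B*γ N ≤ bb*γ N :=
      mul_le_mul_of_nonneg_right (by rw [hBdef]; exact neg_abs_le bb) hγpos.le
    have h9 : -B*(η/(2*(B+1)) * (N:ℝ)) ≤ -B*γ N := by
      have h9' := mul_le_mul_of_nonneg_left hγle hB0
      linarith only [h9']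
    have h10 : -(η/2)*(N:ℝ) ≤ -B*(η/(2*(B+1)) * (N:ℝ)) := by
      have h11 : B * (η/(2*(B+1))) ≤ η/2 := by
        have hpos : (0:ℝ) < 2*(B+1) := by linarith only [hB0]
        have h12 : B * (η/(2*(B+1))) = (B*η)/(2*(B+1)) := by ring
        rw [h12, div_le_div_iff₀ hpos (by norm_num : (0:ℝ) < 2)]
        linarith only [hη0.le, mul_nonneg hB0 hη0.le]
      have h13 := mul_le_mul_of_nonneg_right h11 hNnn
      linarith only [h13]
    linarith only [hlogP, h6, h8, h9, h10]
  have hfin : (1/γ N) * Real.log P ≤ (1/γ N) * (bb * γ N) :=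
    mul_le_mul_of_nonneg_left hkey (by positivity)
  calc (1/γ N) * Real.log P ≤ (1/γ N) * (bb * γ N) := hfin
  _ = bb := by field_simp
end
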